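/- arXiv:2507.04797 — 7 statements merged into one kernel-verified Lean document; each statement's English description precedes it below -/
import Mathlib

section
/- Let q ≥ 2, n ≥ 1, x ∈ Σ_q^n and 1 ≤ i ≤ n, and let x′ ∈ Σ_q^{n−1} be obtained from x by deleting the i-th symbol, i.e. x′ = x_{[1,i−1]} x_{[i+1,n]}. Let y = ψ(x) ∈ Σ_q^{n+1} and y′ = ψ(x′) ∈ Σ_q^n. Then y′ is obtained from y by replacing the two symbols y_i y_{i+1} with the single symbol (y_i + y_{i+1}) mod q; that is, y′_k = y_k for 1 ≤ k < i, y′_i = (y_i + y_{i+1}) mod q, and y′_k = y_{k+1} for i < k ≤ n. -/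
/-!
Deleting `x_i` reindexes the zero-padded sequence: `x'_k = x_k` for `k < i` and `x'_k = x_{k+1}`
for `k ≥ i`, boundary zeros included. Hence every difference `x'_{k-1} - x'_k` is a difference of
`x` at shifted positions, except the one straddling the deleted symbol,
`x_{i-1} - x_{i+1} = (x_{i-1} - x_i) + (x_i - x_{i+1})`.
-/

/-- The symbol `x_k` (1-based index), with the convention `x_0 = x_{n+1} = 0`. -/
def xpad {q n : ℕ} (x : Fin n → ZMod q) (k : ℕ) : ZMod q :=
  if h : 1 ≤ k ∧ k ≤ n then x ⟨k - 1, by omega⟩ else 0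

/-- The differential sequence `ψ(x) ∈ Σ_q^{n+1}`: `ψ(x)_i = (x_{i-1} - x_i) mod q`
(1-based), with `x_0 = x_{n+1} = 0`.  Index `j : Fin (n+1)` is 1-based position `j+1`. -/
def psi {q n : ℕ} (x : Fin n → ZMod q) : Fin (n + 1) → ZMod q :=
  fun j => xpad x (j : ℕ) - xpad x ((j : ℕ) + 1)

/-- Delete the symbol at 1-based position `i` from `x`, giving a sequence of length `n-1`.
Index `j : Fin (n-1)` is 1-based position `j+1`. -/
def deleteAt {q n : ℕ} (x : Fin n → ZMod q) (i : ℕ) : Fin (n - 1) → ZMod q :=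
  fun j => if (j : ℕ) + 1 < i then x ⟨(j : ℕ), by omega⟩ else x ⟨(j : ℕ) + 1, by omega⟩

section DeleteAt

variable {q n : ℕ} (x : Fin n → ZMod q) {i : ℕ}

lemma xpad_deleteAt_of_lt (hin : i ≤ n) {k : ℕ} (hk : k < i) :
    xpad (deleteAt x i) k = xpad x k := by
  simp only [xpad, deleteAt]
  by_cases hrange : 1 ≤ k ∧ k ≤ n - 1
  · rw [dif_pos hrange, dif_pos (by omega), if_pos (by omega)]
  · rw [dif_neg hrange, dif_neg (by omega)]

lemma xpad_deleteAt_of_le (hi1 : 1 ≤ i) (hin : i ≤ n) {k : ℕ} (hk : i ≤ k) :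
    xpad (deleteAt x i) k = xpad x (k + 1) := by
  simp only [xpad, deleteAt]
  by_cases hrange : 1 ≤ k ∧ k ≤ n - 1
  · rw [dif_pos hrange, dif_pos (by omega), if_neg (by omega)]
    congr 2
    omega
  · rw [dif_neg hrange, dif_neg (by omega)]

lemma psi_deleteAt_of_lt (hin : i ≤ n) (k : Fin (n - 1 + 1))
    (hk : (k : ℕ) + 1 < i) :
    psi (deleteAt x i) k = psi x ⟨k, by omega⟩ := by
  simp only [psi]
  rw [xpad_deleteAt_of_lt x hin (by omega), xpad_deleteAt_of_lt x hin hk]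

lemma psi_deleteAt_of_eq (hi1 : 1 ≤ i) (hin : i ≤ n) (k : Fin (n - 1 + 1))
    (hk : (k : ℕ) + 1 = i) :
    psi (deleteAt x i) k = psi x ⟨k, by omega⟩ + psi x ⟨k + 1, by omega⟩ := by
  simp only [psi]
  rw [xpad_deleteAt_of_lt x hin (by omega), xpad_deleteAt_of_le x hi1 hin hk.ge]
  ring

lemma psi_deleteAt_of_gt (hi1 : 1 ≤ i) (hin : i ≤ n) (k : Fin (n - 1 + 1))
    (hk : i < (k : ℕ) + 1) :
    psi (deleteAt x i) k = psi x ⟨k + 1, by omega⟩ := by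
  simp only [psi]
  rw [xpad_deleteAt_of_le x hi1 hin (by omega), xpad_deleteAt_of_le x hi1 hin (by omega)]

end DeleteAt

theorem stmt1 (q n : ℕ) (hn : 1 ≤ n)
    (x : Fin n → ZMod q) (i : ℕ) (hi1 : 1 ≤ i) (hin : i ≤ n) :
    ∀ k : Fin (n - 1 + 1),
      ((k : ℕ) + 1 < i → psi (deleteAt x i) k = psi x ⟨(k : ℕ), by omega⟩) ∧
      ((k : ℕ) + 1 = i →
        psi (deleteAt x i) k = psi x ⟨(k : ℕ), by omega⟩ + psi x ⟨(k : ℕ) + 1, by omega⟩) ∧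
      (i < (k : ℕ) + 1 → psi (deleteAt x i) k = psi x ⟨(k : ℕ) + 1, by omega⟩) :=
  fun k => ⟨psi_deleteAt_of_lt x hin k, psi_deleteAt_of_eq x hi1 hin k,
    psi_deleteAt_of_gt x hi1 hin k⟩
end

section
/- Let q, n ≥ 2 be integers, let N ≥ (n+1)q be an integer and let 0 ≤ a < N. Then the code C_ψ(q,n;N) = {x ∈ Σ_q^n : VT(ψ(x)) ≡ a (mod N)} can correct the deletion of one symbol; that is, for any two distinct codewords x, z ∈ C_ψ(q,n;N), no sequence in Σ_q^{n−1} can be obtained both from x by deleting one symbol and from z by deleting one symbol. -/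
/-- The VT syndrome `VT(y) = Σ_{i=1}^m i·y_i` (symbols viewed as integers). -/
def VTsum {q m : ℕ} (y : Fin m → ZMod q) : ℕ := ∑ i : Fin m, ((i : ℕ) + 1) * (y i).val

/-!
Deleting `x_i` merges the adjacent entries `ψ(x)_i, ψ(x)_{i+1}` into their sum mod `q`, so
`VT(ψ(x)) - VT(ψ(w)) = ψ(x)_{i+1} + q·i·c + Σ_{k > i} ψ(w)_k` for the deleted word `w` and a
carry `c ∈ {0, 1}`. This shift lies in `[0, (n+1)q)`, so it is determined by `w` and `a`.
Comparing the shifts of two codewords giving the same `w` shows that they either split the same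
entry of `ψ(w)` in the same way, or both insert a zero into one run of zeros of `ψ(w)`. Either
way `ψ(x) = ψ(z)`, and `ψ` is injective.
-/

open Finset

section Sequences

variable {q : ℕ}

/-- `ψ(x)` as a sequence indexed from `0` (so `psiSeq x k` is the paper's `ψ(x)_{k+1}`). -/
def psiSeq {n : ℕ} (x : Fin n → ZMod q) (k : ℕ) : ZMod q := xpad x k - xpad x (k + 1)

/-- Merges the entries `i - 1` and `i` of `u` into their sum, shifting the later entries down. -/
def mergeAt (u : ℕ → ZMod q) (i k : ℕ) : ZMod q :=
  if k + 1 < i then u k else if k + 1 = i then u k + u (k + 1) else u (k + 1)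

def insertZeroAt (v : ℕ → ZMod q) (i k : ℕ) : ZMod q :=
  if k < i then v k else if k = i then 0 else v (k - 1)

def vtSeq (u : ℕ → ZMod q) (m : ℕ) : ℕ := ∑ k ∈ range m, (k + 1) * (u k).val

lemma VTsum_psi {n : ℕ} (x : Fin n → ZMod q) : VTsum (psi x) = vtSeq (psiSeq x) (n + 1) :=
  Fin.sum_univ_eq_sum_range (fun k => (k + 1) * (psiSeq x k).val) (n + 1)

lemma xpad_deleteAt {n i : ℕ} (x : Fin n → ZMod q) (hi : 1 ≤ i) (hin : i ≤ n) (m : ℕ) :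
    xpad (deleteAt x i) m = if m < i then xpad x m else xpad x (m + 1) := by
  unfold xpad deleteAt
  dsimp only
  split_ifs <;> first
    | rfl
    | omega
    | (congr 1; exact Fin.ext (by simp; omega))

lemma psiSeq_deleteAt {n i : ℕ} (x : Fin n → ZMod q) (hi : 1 ≤ i) (hin : i ≤ n) :
    psiSeq (deleteAt x i) = mergeAt (psiSeq x) i := by
  funext k
  simp only [psiSeq, mergeAt, xpad_deleteAt x hi hin]
  split_ifs <;> first | rfl | omega | (subst_vars; ring)

lemma psiSeq_injective {n : ℕ} : Function.Injective (psiSeq (q := q) (n := n)) := by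
  intro x z h
  have hpad (y : Fin n → ZMod q) (k : ℕ) : xpad y k = -∑ t ∈ range k, psiSeq y t := by
    simp only [psiSeq, sum_range_sub', xpad, dif_neg (by omega : ¬(1 ≤ 0 ∧ 0 ≤ n)), zero_sub,
      neg_neg]
  funext t
  have hx : xpad x (t + 1) = x t := by rw [xpad, dif_pos (by omega)]; rfl
  have hz : xpad z (t + 1) = z t := by rw [xpad, dif_pos (by omega)]; rfl
  rw [← hx, ← hz, hpad, hpad, h]

lemma eq_of_mergeAt_eq_of_apply_eq {u u' : ℕ → ZMod q} {i : ℕ} (hi : 1 ≤ i)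
    (hv : mergeAt u i = mergeAt u' i) (hui : u i = u' i) : u = u' := by
  funext k
  rcases lt_trichotomy (k + 1) i with hk | hk | hk
  · simpa [mergeAt, hk] using congrFun hv k
  · have := congrFun hv k
    simp only [mergeAt, hk, lt_irrefl, if_false, if_true] at this
    subst hk
    rw [hui] at this
    exact add_right_cancel this
  · obtain ⟨k, rfl⟩ : ∃ m, k = m + 1 := ⟨k - 1, by omega⟩
    have := congrFun hv k
    simp only [mergeAt, if_neg (by omega : ¬ k + 1 < i)] at this
    rcases eq_or_ne (k + 1) i with h | h
    · rw [h]; exact hui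
    · simpa [h] using this

lemma eq_insertZeroAt_mergeAt_of_apply_eq_zero {u : ℕ → ZMod q} {i : ℕ} (hi : 1 ≤ i)
    (hu : u i = 0) : u = insertZeroAt (mergeAt u i) i := by
  funext k
  simp only [insertZeroAt, mergeAt]
  split_ifs <;> first
    | rfl
    | omega
    | (obtain rfl : k = i := (by omega); exact hu)
    | (obtain rfl : k + 1 = i := (by omega); rw [hu, add_zero])
    | (congr 1; omega)

lemma eq_insertZeroAt_mergeAt_succ_of_apply_eq_zero {u : ℕ → ZMod q} {i : ℕ} (hu : u i = 0) :
    u = insertZeroAt (mergeAt u (i + 1)) i := by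
  funext k
  simp only [insertZeroAt, mergeAt]
  split_ifs <;> first
    | rfl
    | omega
    | (obtain rfl : k = i := (by omega); exact hu)
    | (obtain rfl : k = i + 1 := (by omega); rw [Nat.add_sub_cancel, hu, zero_add])
    | (congr 1; omega)

lemma insertZeroAt_eq_of_forall_Ico_eq_zero {v : ℕ → ZMod q} {i j : ℕ} (hij : i ≤ j)
    (hv : ∀ k ∈ Ico i j, v k = 0) : insertZeroAt v i = insertZeroAt v j := by
  funext k
  simp only [insertZeroAt]
  split_ifs <;> first
    | rfl
    | omega
    | (exact hv _ (mem_Ico.2 ⟨by omega, by omega⟩))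
    | (exact (hv _ (mem_Ico.2 ⟨by omega, by omega⟩)).symm)
    | (rw [hv _ (mem_Ico.2 ⟨by omega, by omega⟩), hv _ (mem_Ico.2 ⟨by omega, by omega⟩)])

end Sequences

section Shift

variable {q : ℕ}

lemma sum_Ico_val_le [NeZero q] (v : ℕ → ZMod q) (a b : ℕ) :
    ∑ k ∈ Ico a b, (v k).val ≤ (b - a) * q := by
  simpa [Nat.card_Ico, smul_eq_mul] using
    sum_le_card_nsmul (Ico a b) (fun k => (v k).val) q fun k _ => (v k).val_lt.le

lemma vtSeq_add_mul_mergeAt (u : ℕ → ZMod q) {i n : ℕ} (hi : 1 ≤ i) (hin : i ≤ n) :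
    vtSeq u (n + 1) + i * (mergeAt u i (i - 1)).val
      = vtSeq (mergeAt u i) n + i * ((u (i - 1)).val + (u i).val) + (u i).val
        + ∑ k ∈ Ico i n, (mergeAt u i k).val := by
  induction n, hin using Nat.le_induction with
  | base =>
    obtain ⟨m, rfl⟩ : ∃ m, i = m + 1 := ⟨i - 1, by omega⟩
    have hlow : vtSeq (mergeAt u (m + 1)) m = vtSeq u m :=
      sum_congr rfl fun k hk => by rw [mergeAt, if_pos (by simpa using hk)]
    simp only [vtSeq, sum_range_succ, Ico_self, sum_empty, Nat.add_sub_cancel] at hlow ⊢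
    rw [hlow]
    ring
  | succ n hin ih =>
    have hn : mergeAt u i n = u (n + 1) := by rw [mergeAt, if_neg (by omega), if_neg (by omega)]
    simp only [vtSeq, sum_range_succ] at ih ⊢
    rw [sum_Ico_succ_top hin, hn]
    linarith

lemma exists_vtSeq_eq_vtSeq_mergeAt_add [NeZero q] (u : ℕ → ZMod q) {i n : ℕ} (hi : 1 ≤ i)
    (hin : i ≤ n) :
    ∃ c ≤ 1, (u (i - 1)).val + (u i).val = (mergeAt u i (i - 1)).val + q * c ∧
      vtSeq u (n + 1) = vtSeq (mergeAt u i) n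
        + ((u i).val + q * i * c + ∑ k ∈ Ico i n, (mergeAt u i k).val) := by
  have hmid : mergeAt u i (i - 1) = u (i - 1) + u i := by
    rw [mergeAt, if_neg (by omega), if_pos (by omega), Nat.sub_add_cancel hi]
  have hcarry : (u (i - 1)).val + (u i).val
      = (mergeAt u i (i - 1)).val + q * (((u (i - 1)).val + (u i).val) / q) := by
    rw [hmid, ZMod.val_add]
    exact (Nat.mod_add_div _ q).symm
  refine ⟨_, ?_, hcarry, ?_⟩
  · have := (u (i - 1)).val_lt
    have := (u i).val_lt
    exact Nat.lt_succ_iff.mp ((Nat.div_lt_iff_lt_mul (NeZero.pos q)).2 (by omega))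
  · have h := vtSeq_add_mul_mergeAt u hi hin
    rw [hcarry] at h
    linarith

lemma shift_lt [NeZero q] (v : ℕ → ZMod q) {A i n c : ℕ} (hA : A < q) (hc : c ≤ 1)
    (hin : i ≤ n) : A + q * i * c + ∑ k ∈ Ico i n, (v k).val < (n + 1) * q := by
  have hsum := sum_Ico_val_le v i n
  have hqi : q * i * c ≤ q * i := mul_le_of_le_one_right' hc
  obtain ⟨d, rfl⟩ := Nat.exists_eq_add_of_le hin
  rw [Nat.add_sub_cancel_left] at hsum
  nlinarith

end Shift

lemma eq_of_mergeAt_eq_of_lt {q : ℕ} [NeZero q] {u u' : ℕ → ZMod q} {i m c c' : ℕ}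
    (hi : 1 ≤ i) (him : i ≤ m) (hc : c ≤ 1) (hc' : c' ≤ 1) (hv : mergeAt u i = mergeAt u' (m + 1))
    (hcarry' : (u' m).val + (u' (m + 1)).val = (mergeAt u i m).val + q * c')
    (hshift : (u i).val + q * i * c + ∑ k ∈ Ico i (m + 1), (mergeAt u i k).val
      = (u' (m + 1)).val + q * (m + 1) * c') :
    u = u' := by
  set v := mergeAt u i
  rw [sum_Ico_succ_top (by omega)] at hshift
  have hqi : q ≤ q * i := Nat.le_mul_of_pos_right q hi
  have hqm : q * (m + 1) = q * i + (m - i) * q + q := by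
    obtain ⟨d, rfl⟩ := Nat.exists_eq_add_of_le him
    rw [Nat.add_sub_cancel_left]
    ring
  have hS := sum_Ico_val_le v i m
  have hA := (u i).val_lt
  have hd := (u' m).val_lt
  obtain ⟨hA0, hS0, hd0⟩ :
      (u i).val = 0 ∧ ∑ k ∈ Ico i m, (v k).val = 0 ∧ (u' m).val = 0 := by
    interval_cases c <;> interval_cases c' <;> omega
  calc u = insertZeroAt v i :=
        eq_insertZeroAt_mergeAt_of_apply_eq_zero hi ((ZMod.val_eq_zero _).1 hA0)
    _ = insertZeroAt v m := insertZeroAt_eq_of_forall_Ico_eq_zero him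
        fun k hk => (ZMod.val_eq_zero _).1 (sum_eq_zero_iff.1 hS0 k hk)
    _ = u' := by
      rw [hv]
      exact (eq_insertZeroAt_mergeAt_succ_of_apply_eq_zero ((ZMod.val_eq_zero _).1 hd0)).symm

theorem eq_of_mergeAt_eq_of_vtSeq_modEq {q N n i j : ℕ} [NeZero q] {u u' : ℕ → ZMod q}
    (hN : (n + 1) * q ≤ N) (hi : 1 ≤ i) (hij : i ≤ j) (hjn : j ≤ n)
    (hv : mergeAt u i = mergeAt u' j) (hvt : vtSeq u (n + 1) ≡ vtSeq u' (n + 1) [MOD N]) :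
    u = u' := by
  obtain ⟨c, hc, -, hu⟩ := exists_vtSeq_eq_vtSeq_mergeAt_add u hi (hij.trans hjn)
  obtain ⟨c', hc', hcarry', hu'⟩ := exists_vtSeq_eq_vtSeq_mergeAt_add u' (hi.trans hij) hjn
  rw [← hv] at hu' hcarry'
  have hshift : (u i).val + q * i * c + ∑ k ∈ Ico i n, (mergeAt u i k).val
      = (u' j).val + q * j * c' + ∑ k ∈ Ico j n, (mergeAt u i k).val := by
    refine Nat.ModEq.eq_of_lt_of_lt ?_
      ((shift_lt _ (u i).val_lt hc (hij.trans hjn)).trans_le hN)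
      ((shift_lt _ (u' j).val_lt hc' hjn).trans_le hN)
    rw [hu, hu'] at hvt
    exact Nat.ModEq.add_left_cancel' _ hvt
  rw [← sum_Ico_consecutive _ hij hjn, ← add_assoc, add_left_inj] at hshift
  rcases hij.eq_or_lt with rfl | hlt
  · refine eq_of_mergeAt_eq_of_apply_eq hi hv (ZMod.val_injective q ?_)
    rw [Ico_self, sum_empty, add_zero] at hshift
    have hqi : q ≤ q * i := Nat.le_mul_of_pos_right q hi
    have hA := (u i).val_lt
    have hB := (u' i).val_lt
    interval_cases c <;> interval_cases c' <;> omega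
  · obtain ⟨m, rfl⟩ : ∃ m, j = m + 1 := ⟨j - 1, by omega⟩
    rw [Nat.add_sub_cancel] at hcarry'
    exact eq_of_mergeAt_eq_of_lt hi (by omega) hc hc' hv hcarry' hshift

theorem stmt2_general (q n N a : ℕ) (hq : 2 ≤ q)
    (hN : (n + 1) * q ≤ N)
    (x z : Fin n → ZMod q)
    (hx : VTsum (psi x) % N = a) (hz : VTsum (psi z) % N = a) (hxz : x ≠ z)
    (i j : ℕ) (hi1 : 1 ≤ i) (hin : i ≤ n) (hj1 : 1 ≤ j) (hjn : j ≤ n) :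
    deleteAt x i ≠ deleteAt z j := by
  have : NeZero q := ⟨by omega⟩
  intro hw
  have hvt : vtSeq (psiSeq x) (n + 1) ≡ vtSeq (psiSeq z) (n + 1) [MOD N] := by
    rw [← VTsum_psi, ← VTsum_psi]
    exact hx.trans hz.symm
  have hmerge : mergeAt (psiSeq x) i = mergeAt (psiSeq z) j := by
    rw [← psiSeq_deleteAt x hi1 hin, ← psiSeq_deleteAt z hj1 hjn, hw]
  refine hxz (psiSeq_injective ?_)
  rcases le_total i j with hij | hji
  · exact eq_of_mergeAt_eq_of_vtSeq_modEq hN hi1 hij hjn hmerge hvt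
  · exact (eq_of_mergeAt_eq_of_vtSeq_modEq hN hj1 hji hin hmerge.symm hvt.symm).symm

/-- The code `C_ψ(q,n;N) = {x : VT(ψ(x)) ≡ a (mod N)}` corrects a single deletion. -/
theorem stmt2 (q n N a : ℕ) (hq : 2 ≤ q) (hn : 2 ≤ n)
    (hN : (n + 1) * q ≤ N) (ha : a < N)
    (x z : Fin n → ZMod q)
    (hx : VTsum (psi x) % N = a) (hz : VTsum (psi z) % N = a) (hxz : x ≠ z)
    (i j : ℕ) (hi1 : 1 ≤ i) (hin : i ≤ n) (hj1 : 1 ≤ j) (hjn : j ≤ n) :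
    deleteAt x i ≠ deleteAt z j :=
  stmt2_general q n N a hq hN x z hx hz hxz i j hi1 hin hj1 hjn
end

section
/- Let q, n ≥ 2 be integers, let s ≥ 1 be a real number and let 0 < ε < (q−1)/2. If ℓ is an integer with ℓ ≤ n and ℓ ≥ ((q−1)²/ε²)·ln(2n√s), then the number of strong-(ℓ,ε)-locally-balanced sequences in Σ_q^n is at least q^n·(1 − 1/(2s)). -/
/-
For a uniformly random sequence, the weight of a fixed window of length `len` is a sum of `len`
independent symbols, each uniform on `{0, …, q-1}`. Hoeffding's lemma bounds their centred
exponential moments by `exp (t² (q-1)² / 8)`, so a Chernoff bound with `t = 4ε/(q-1)²` shows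
that at most a `2 exp (-2ε² len / (q-1)²)` fraction of sequences deviate by `ε len` on that
window. The hypothesis on `ℓ` makes this at most `1 / (2 n² s)` for every window of length
at least `ℓ`, and a union bound over the at most `n²` windows leaves `q^n / (2s)` bad sequences.
-/

/-- The L1-weight of the length-`len` substring of `y` starting at 0-based position `a`. -/
def wsub {q m : ℕ} (y : Fin m → ZMod q) (a len : ℕ) (h : a + len ≤ m) : ℕ :=
  ∑ i : Fin len, (y ⟨a + (i : ℕ), by omega⟩).val

/-- `y` is strong-(ℓ,ε)-locally-balanced: every substring of length `ℓ′ ≥ ℓ` has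
L1-weight in `[((q-1)/2 - ε)ℓ′, ((q-1)/2 + ε)ℓ′]`. -/
def StrongLB {q m : ℕ} (y : Fin m → ZMod q) (ℓ : ℕ) (ε : ℝ) : Prop :=
  ∀ a len : ℕ, ℓ ≤ len → ∀ h : a + len ≤ m,
    (((q : ℝ) - 1) / 2 - ε) * (len : ℝ) ≤ (wsub y a len h : ℝ) ∧
    (wsub y a len h : ℝ) ≤ (((q : ℝ) - 1) / 2 + ε) * (len : ℝ)

open Finset Real

lemma sum_prod_apply_eq_pow_mul_pow {ι α R : Type*} [Fintype ι] [DecidableEq ι] [Fintype α]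
    [CommSemiring R] (S : Finset ι) (f : α → R) :
    ∑ y : ι → α, ∏ i ∈ S, f (y i) =
      (∑ x, f x) ^ #S * (Fintype.card α : R) ^ (Fintype.card ι - #S) := by
  have hext (y : ι → α) : ∏ i ∈ S, f (y i) = ∏ i, if i ∈ S then f (y i) else 1 := by
    rw [prod_ite_mem, univ_inter]
  simp_rw [hext, ← Fintype.prod_sum (fun i x => if i ∈ S then f x else 1)]
  simp_rw [sum_ite_irrel, sum_const, card_univ, nsmul_one]
  rw [prod_ite, prod_const, prod_const, filter_mem_eq_inter, univ_inter, filter_not,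
    filter_mem_eq_inter, univ_inter, card_univ_sdiff]

lemma ZMod.sum_val_eq_sum_range {M : Type*} [AddCommMonoid M] (q : ℕ) [NeZero q] (g : ℕ → M) :
    ∑ x : ZMod q, g x.val = ∑ j ∈ range q, g j := by
  obtain ⟨k, rfl⟩ : ∃ k, q = k + 1 := Nat.exists_eq_succ_of_ne_zero (NeZero.ne q)
  exact Fin.sum_univ_eq_sum_range g (k + 1)

lemma card_le_abs_le_mul_sum_exp {α : Type*} (s : Finset α) (X : α → ℝ) (c : ℝ) :
    (#{y ∈ s | c ≤ |X y|} : ℝ) ≤ exp (-c) * ∑ y ∈ s, (exp (X y) + exp (-X y)) := by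
  rw [← div_le_iff₀' (exp_pos _), exp_neg, div_inv_eq_mul, ← nsmul_eq_mul, ← sum_const]
  calc ∑ _y ∈ s with c ≤ |X _y|, exp c
      ≤ ∑ y ∈ s with c ≤ |X y|, (exp (X y) + exp (-X y)) :=
        sum_le_sum fun y hy => (exp_le_exp.2 (mem_filter.1 hy).2).trans (exp_abs_le _)
    _ ≤ ∑ y ∈ s, (exp (X y) + exp (-X y)) :=
        sum_le_sum_of_subset_of_nonneg (filter_subset _ _) fun y _ _ => by positivity

lemma sum_range_exp_mul_sub_le (q : ℕ) (t : ℝ) :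
    ∑ j ∈ range q, exp (t * (j - ((q : ℝ) - 1) / 2)) ≤ q * exp (t ^ 2 * ((q : ℝ) - 1) ^ 2 / 8) := by
  set μ : ℝ := ((q : ℝ) - 1) / 2 with hμ
  have hreflect : ∑ j ∈ range q, exp (t * (j - μ)) = ∑ j ∈ range q, exp (-(t * (j - μ))) := by
    rw [← sum_range_reflect]
    refine sum_congr rfl fun j hj => ?_
    rw [mem_range] at hj
    rw [Nat.cast_sub (by omega), Nat.cast_sub (by omega), hμ]
    ring_nf
  have hcosh : ∑ j ∈ range q, exp (t * (j - μ)) = ∑ j ∈ range q, cosh (t * (j - μ)) := by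
    simp_rw [cosh_eq]
    rw [← sum_div, sum_add_distrib, ← hreflect]
    ring
  rw [hcosh, ← card_range q, ← nsmul_eq_mul, ← sum_const, card_range]
  refine sum_le_sum fun j hj => (cosh_le_exp_half_sq _).trans (exp_le_exp.2 ?_)
  have hj : (j : ℝ) + 1 ≤ q := by exact_mod_cast mem_range.1 hj
  have hdev : (j - μ) ^ 2 ≤ μ ^ 2 :=
    sq_le_sq' (by linarith [(Nat.cast_nonneg j : (0:ℝ) ≤ j)]) (by linarith)
  calc (t * (j - μ)) ^ 2 / 2 = t ^ 2 * (j - μ) ^ 2 / 2 := by ring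
    _ ≤ t ^ 2 * μ ^ 2 / 2 := by gcongr
    _ = t ^ 2 * ((q : ℝ) - 1) ^ 2 / 8 := by rw [hμ]; ring

lemma sum_exp_wsub_le (q n : ℕ) [NeZero q] (a len : ℕ) (h : a + len ≤ n) (t : ℝ) :
    ∑ y : Fin n → ZMod q, exp (t * (wsub y a len h - ((q : ℝ) - 1) / 2 * len)) ≤
      (q : ℝ) ^ n * exp (len * (t ^ 2 * ((q : ℝ) - 1) ^ 2 / 8)) := by
  let g : ZMod q → ℝ := fun x => exp (t * (x.val - ((q : ℝ) - 1) / 2))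
  let window : Fin len ↪ Fin n :=
    ⟨fun i => ⟨a + i, by omega⟩, fun i j hij => Fin.ext (by simpa using hij)⟩
  have hprod (y : Fin n → ZMod q) :
      exp (t * (wsub y a len h - ((q : ℝ) - 1) / 2 * len)) = ∏ i ∈ univ.map window, g (y i) := by
    rw [prod_map, ← exp_sum, wsub]
    simp only [← mul_sum, sum_sub_distrib, sum_const, card_univ, Fintype.card_fin, nsmul_eq_mul]
    push_cast
    rw [mul_comm (len : ℝ)]
    rfl
  have hg : ∑ x, g x ≤ q * exp (t ^ 2 * ((q : ℝ) - 1) ^ 2 / 8) :=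
    (ZMod.sum_val_eq_sum_range q _).trans_le (sum_range_exp_mul_sub_le q t)
  simp_rw [hprod, sum_prod_apply_eq_pow_mul_pow, card_map, card_univ, Fintype.card_fin, ZMod.card]
  calc (∑ x, g x) ^ len * (q : ℝ) ^ (n - len)
      ≤ (q * exp (t ^ 2 * ((q : ℝ) - 1) ^ 2 / 8)) ^ len * (q : ℝ) ^ (n - len) := by
        gcongr
    _ = (q : ℝ) ^ n * exp (len * (t ^ 2 * ((q : ℝ) - 1) ^ 2 / 8)) := by
        rw [mul_pow, exp_nat_mul, mul_right_comm, ← pow_add, Nat.add_sub_cancel' (by omega)]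

lemma card_window_deviation_le (q n : ℕ) [NeZero q] (hq : 1 < q) {ε : ℝ} (hε : 0 ≤ ε)
    (a len : ℕ) (h : a + len ≤ n) :
    (#{y : Fin n → ZMod q | ε * len ≤ |(wsub y a len h : ℝ) - ((q : ℝ) - 1) / 2 * len|} : ℝ) ≤
      2 * (q : ℝ) ^ n * exp (-2 * ε ^ 2 * len / ((q : ℝ) - 1) ^ 2) := by
  have hq' : (0 : ℝ) < (q : ℝ) - 1 := by
    rw [sub_pos]; exact_mod_cast hq
  set D : (Fin n → ZMod q) → ℝ := fun y => wsub y a len h - ((q : ℝ) - 1) / 2 * len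
  -- the Chernoff parameter minimising `-t ε len + len t² (q-1)² / 8`
  set t : ℝ := 4 * ε / ((q : ℝ) - 1) ^ 2 with ht_def
  have ht : 0 ≤ t := by positivity
  have hsub : ({y | ε * len ≤ |D y|} : Finset (Fin n → ZMod q)) ⊆
      ({y | t * ε * len ≤ |t * D y|} : Finset _) :=
    monotone_filter_right _ fun y _ hy => by
      rw [abs_mul, abs_of_nonneg ht, mul_assoc]
      exact mul_le_mul_of_nonneg_left hy ht
  have hmgf : ∑ y : Fin n → ZMod q, (exp (t * D y) + exp (-(t * D y))) ≤
      2 * (q : ℝ) ^ n * exp (len * (t ^ 2 * ((q : ℝ) - 1) ^ 2 / 8)) := by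
    rw [sum_add_distrib, two_mul, add_mul]
    simp_rw [← neg_mul]
    gcongr
    · exact sum_exp_wsub_le q n a len h t
    · simpa only [neg_sq] using sum_exp_wsub_le q n a len h (-t)
  calc (#{y : Fin n → ZMod q | ε * len ≤ |D y|} : ℝ)
      ≤ #{y : Fin n → ZMod q | t * ε * len ≤ |t * D y|} := by exact_mod_cast card_le_card hsub
    _ ≤ exp (-(t * ε * len)) * ∑ y : Fin n → ZMod q, (exp (t * D y) + exp (-(t * D y))) :=
        card_le_abs_le_mul_sum_exp _ _ _
    _ ≤ exp (-(t * ε * len)) *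
          (2 * (q : ℝ) ^ n * exp (len * (t ^ 2 * ((q : ℝ) - 1) ^ 2 / 8))) := by
        gcongr
    _ = 2 * (q : ℝ) ^ n * exp (-2 * ε ^ 2 * len / ((q : ℝ) - 1) ^ 2) := by
        rw [mul_left_comm, ← exp_add]
        congr 2
        rw [ht_def]
        field_simp
        ring

lemma strongLB_iff_abs_sub_le {q m : ℕ} (y : Fin m → ZMod q) (ℓ : ℕ) (ε : ℝ) :
    StrongLB y ℓ ε ↔ ∀ a len : ℕ, ℓ ≤ len → ∀ h : a + len ≤ m,
      |(wsub y a len h : ℝ) - ((q : ℝ) - 1) / 2 * len| ≤ ε * len := by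
  refine forall₂_congr fun a len => forall₂_congr fun _ h => ?_
  rw [abs_le]
  constructor <;> rintro ⟨h₁, h₂⟩ <;> constructor <;> linarith

def longWindows (n ℓ : ℕ) : Finset (ℕ × ℕ) :=
  {w ∈ range n ×ˢ Icc 1 n | ℓ ≤ w.2 ∧ w.1 + w.2 ≤ n}

lemma card_longWindows_le (n ℓ : ℕ) : #(longWindows n ℓ) ≤ n ^ 2 :=
  (card_filter_le _ _).trans (by simp [sq])

open scoped Classical in
lemma card_not_strongLB_le (q n : ℕ) [NeZero q] (hq : 1 < q) {ε : ℝ} (hε : 0 ≤ ε) (ℓ : ℕ) :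
    (#{y : Fin n → ZMod q | ¬StrongLB y ℓ ε} : ℝ) ≤
      ∑ w ∈ longWindows n ℓ, 2 * (q : ℝ) ^ n * exp (-2 * ε ^ 2 * w.2 / ((q : ℝ) - 1) ^ 2) := by
  set bad : ℕ × ℕ → Finset (Fin n → ZMod q) := fun w =>
    {y | ∃ h : w.1 + w.2 ≤ n, ε * w.2 ≤ |(wsub y w.1 w.2 h : ℝ) - ((q : ℝ) - 1) / 2 * w.2|}
  have hcover :
      ({y | ¬StrongLB y ℓ ε} : Finset (Fin n → ZMod q)) ⊆ (longWindows n ℓ).biUnion bad := by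
    intro y hy
    simp only [mem_filter, mem_univ, true_and, strongLB_iff_abs_sub_le, not_forall, not_le] at hy
    obtain ⟨a, len, hℓ, h, hdev⟩ := hy
    -- an empty window has zero deviation
    have hlen : len ≠ 0 := by
      rintro rfl
      simp [wsub] at hdev
    refine mem_biUnion.2 ⟨(a, len), ?_, mem_filter.2 ⟨mem_univ y, h, hdev.le⟩⟩
    simp only [longWindows, mem_filter, mem_product, mem_range, mem_Icc]
    exact ⟨⟨by omega, by omega, by omega⟩, hℓ, h⟩
  calc (#{y : Fin n → ZMod q | ¬StrongLB y ℓ ε} : ℝ)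
      ≤ ∑ w ∈ longWindows n ℓ, (#(bad w) : ℝ) := by
        exact_mod_cast (card_le_card hcover).trans card_biUnion_le
    _ ≤ _ := sum_le_sum fun w hw => by
        have h := (mem_filter.1 hw).2.2
        simp only [bad, exists_prop_of_true h]
        exact card_window_deviation_le q n hq hε w.1 w.2 h

lemma sq_mul_exp_neg_two_mul_log_le (n : ℕ) {s : ℝ} (hs : 0 < s) :
    (n : ℝ) ^ 2 * exp (-2 * log (2 * n * √s)) ≤ 1 / (4 * s) := by
  rcases eq_or_ne n 0 with rfl | hn
  · rw [Nat.cast_zero, sq, zero_mul, zero_mul]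
    positivity
  have hpos : 0 < 2 * (n : ℝ) * √s := by positivity
  rw [mul_comm (-2 : ℝ), exp_mul, exp_log hpos, rpow_neg hpos.le, rpow_two, mul_pow, mul_pow,
    sq_sqrt hs.le]
  field_simp
  norm_num

lemma exp_neg_le_exp_neg_of_div_mul_le {c ε L x : ℝ} (hc : 0 < c) (hε : 0 < ε)
    (h : c / ε ^ 2 * L ≤ x) : exp (-2 * ε ^ 2 * x / c) ≤ exp (-2 * L) := by
  have hL : L ≤ ε ^ 2 * x / c := by
    rw [le_div_iff₀ hc]
    rw [div_mul_eq_mul_div, div_le_iff₀ (pow_pos hε 2)] at h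
    linarith
  gcongr
  calc -2 * ε ^ 2 * x / c = -2 * (ε ^ 2 * x / c) := by ring
    _ ≤ -2 * L := by linarith

open scoped Classical in
lemma card_not_strongLB_le_div (q n : ℕ) [NeZero q] (hq : 1 < q) {s ε : ℝ} (hs : 0 < s)
    (hε : 0 < ε) {ℓ : ℕ} (hℓ : ((q : ℝ) - 1) ^ 2 / ε ^ 2 * log (2 * n * √s) ≤ ℓ) :
    (#{y : Fin n → ZMod q | ¬StrongLB y ℓ ε} : ℝ) ≤ (q : ℝ) ^ n / (2 * s) := by
  have hq' : (0 : ℝ) < ((q : ℝ) - 1) ^ 2 := pow_pos (by rw [sub_pos]; exact_mod_cast hq) 2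
  set L := log (2 * (n : ℝ) * √s)
  calc (#{y : Fin n → ZMod q | ¬StrongLB y ℓ ε} : ℝ)
      ≤ ∑ w ∈ longWindows n ℓ, 2 * (q : ℝ) ^ n * exp (-2 * ε ^ 2 * w.2 / ((q : ℝ) - 1) ^ 2) :=
        card_not_strongLB_le q n hq hε.le ℓ
    _ ≤ ∑ _w ∈ longWindows n ℓ, 2 * (q : ℝ) ^ n * exp (-2 * L) := by
        refine sum_le_sum fun w hw => ?_
        have hℓw : (ℓ : ℝ) ≤ w.2 := by exact_mod_cast (mem_filter.1 hw).2.1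
        exact mul_le_mul_of_nonneg_left (exp_neg_le_exp_neg_of_div_mul_le hq' hε (hℓ.trans hℓw))
          (by positivity)
    _ ≤ 2 * (q : ℝ) ^ n * ((n : ℝ) ^ 2 * exp (-2 * L)) := by
        rw [sum_const, nsmul_eq_mul, mul_left_comm]
        gcongr
        exact_mod_cast card_longWindows_le n ℓ
    _ ≤ 2 * (q : ℝ) ^ n * (1 / (4 * s)) := by
        gcongr
        exact sq_mul_exp_neg_two_mul_log_le n hs
    _ = (q : ℝ) ^ n / (2 * s) := by
        field_simp
        ring

theorem stmt3_general (q n : ℕ) (s ε : ℝ) (hs : 1 ≤ s)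
    (hε0 : 0 < ε) (hε : ε < ((q : ℝ) - 1) / 2)
    (ℓ : ℕ)
    (hℓ : ((q : ℝ) - 1) ^ 2 / ε ^ 2 * Real.log (2 * (n : ℝ) * Real.sqrt s) ≤ (ℓ : ℝ)) :
    (q : ℝ) ^ n * (1 - 1 / (2 * s)) ≤
      (Nat.card {y : Fin n → ZMod q // StrongLB y ℓ ε} : ℝ) := by
  classical
  have hq : 1 < q := by exact_mod_cast (show (1 : ℝ) < q by linarith)
  have : NeZero q := ⟨by omega⟩
  have hbad := card_not_strongLB_le_div q n hq (by linarith) hε0 hℓ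
  have hsplit : (#{y : Fin n → ZMod q | StrongLB y ℓ ε} : ℝ) +
      #{y : Fin n → ZMod q | ¬StrongLB y ℓ ε} = (q : ℝ) ^ n := by
    rw [← Nat.cast_add, card_filter_add_card_filter_not, card_univ, Fintype.card_fun, ZMod.card,
      Fintype.card_fin, Nat.cast_pow]
  rw [Nat.card_eq_fintype_card, Fintype.card_subtype, mul_sub, mul_one, mul_one_div]
  linarith

theorem stmt3 (q n : ℕ) (hq : 2 ≤ q) (hn : 2 ≤ n) (s ε : ℝ) (hs : 1 ≤ s)
    (hε0 : 0 < ε) (hε : ε < ((q : ℝ) - 1) / 2)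
    (ℓ : ℕ) (hℓn : ℓ ≤ n)
    (hℓ : ((q : ℝ) - 1) ^ 2 / ε ^ 2 * Real.log (2 * (n : ℝ) * Real.sqrt s) ≤ (ℓ : ℝ)) :
    (q : ℝ) ^ n * (1 - 1 / (2 * s)) ≤
      (Nat.card {y : Fin n → ZMod q // StrongLB y ℓ ε} : ℝ) :=
  stmt3_general q n s ε hs hε0 hε ℓ hℓ
end

section
/- Let (q,t,ε) be a good triple and let ℓ be an integer with ℓ > M_{q,t,ε}. Let 2 ≤ t′ ≤ t and let y ∈ Σ_q^{n+1} be strong-(ℓ,ε)-locally-balanced. Let 1 ≤ i ≤ n+1−t′ and let y′ ∈ Σ_q^{n+1−t′} be obtained from y by replacing the substring y_{[i,i+t′]} with the single symbol (Σ_{k=i}^{i+t′} y_k) mod q (so y′_k = y_k for k < i, y′_i = (Σ_{k=i}^{i+t′} y_k) mod q, and y′_k = y_{k+t′} for k > i). Set Δ = VT(y) − VT(y′) and Δ_sum = Sum(y) − Sum(y′). Suppose j is an index with i ≤ j ≤ n+1−t′ for which there exists an integer σ with 0 ≤ σ ≤ (t′(t′+1)/2)(q−1) such that Δ = j·Δ_sum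 + σ + t′·Σ_{k=j+1}^{n+1−t′} y′_k. Then j − i < ℓ. -/
/-- The L1-weight of a q-ary sequence. -/
def L1 {q m : ℕ} (y : Fin m → ZMod q) : ℕ := ∑ i, (y i).val

/-- `(q,t,ε)` is a good triple. -/
def GoodTriple (q t : ℕ) (ε : ℝ) : Prop :=
  ∀ t' : ℕ, 2 ≤ t' → t' ≤ t →
    ∃ s : ℕ, 1 ≤ s ∧ s ≤ t' ∧
      (t' : ℝ) / 2 - (1 - 2 * ε) * (t' : ℝ) / (2 * (q : ℝ)) < (s : ℝ) ∧
      (s : ℝ) < (t' : ℝ) / 2 + 1 - (1 + 2 * ε) * (t' : ℝ) / (2 * (q : ℝ))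

/-- `M_{q,t,ε}` for a good triple. -/
noncomputable def Mval (q t : ℕ) (ε : ℝ) : ℝ :=
  sSup {M : ℝ | ∃ t' s : ℕ, 2 ≤ t' ∧ t' ≤ t ∧ 1 ≤ s ∧ s ≤ t' ∧
    ((t' : ℝ) / 2 - (1 - 2 * ε) * (t' : ℝ) / (2 * (q : ℝ)) < (s : ℝ) ∧
      (s : ℝ) < (t' : ℝ) / 2 + 1 - (1 + 2 * ε) * (t' : ℝ) / (2 * (q : ℝ))) ∧
    (M = (t' : ℝ) * ((t' : ℝ) + 1) * ((q : ℝ) - 1) /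
        (2 * (s : ℝ) * (q : ℝ) - (t' : ℝ) * ((q : ℝ) - 1 + 2 * ε)) ∨
     M = (t' : ℝ) * ((t' : ℝ) + 1) * ((q : ℝ) - 1) /
        ((t' : ℝ) * ((q : ℝ) - 1 - 2 * ε) - 2 * ((s : ℝ) - 1) * (q : ℝ)))}

/-! Contracting the block `y_{[i,i+t']}` to its sum mod `q` lowers the weight by `q·a`, where
`a` is the carry `⌊S/q⌋` of the block sum `S`, and lowers `VT` by `i·q·a`, plus the block's
internal moment `σ₀ ∈ [0, t'(t'+1)(q-1)/2]`, plus `t'` times the weight of the suffix. Comparing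
with the decoding equation at `j` leaves `t'·W = (j-i)·q·a + σ - σ₀`, where `W` is the weight of
the `j - i` symbols following the block. If `j - i ≥ ℓ` that window is balanced, so `W` lies
within `ε(j-i)` of `(q-1)(j-i)/2`; the integer `s` of the good triple then separates the two
cases `a ≥ s` and `a ≤ s - 1`, each of which bounds `j - i` by one of the two quantities whose
maximum is `M_{q,t,ε} < ℓ`. -/

open Finset

section ContractionIdentity

variable {R : Type*} [CommRing R] (u w : ℕ → R) {p t : ℕ}

theorem sum_range_mul_sub_of_contract (c : ℕ → R) (L : ℕ)
    (hlt : ∀ k < p, w k = u k) (hgt : ∀ k, p < k → w k = u (k + t)) :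
    ∑ k ∈ range (p + (t + 1) + L), c k * u k - ∑ k ∈ range (p + 1 + L), c k * w k =
      ∑ r ∈ range (t + 1), c (p + r) * u (p + r) - c p * w p +
        ∑ k ∈ range L, (c (p + t + 1 + k) - c (p + 1 + k)) * u (p + t + 1 + k) := by
  have hprefix : ∑ k ∈ range p, c k * w k = ∑ k ∈ range p, c k * u k :=
    sum_congr rfl fun k hk => by rw [hlt k (mem_range.mp hk)]
  have hsuffix : ∑ k ∈ range L, c (p + 1 + k) * w (p + 1 + k) =
      ∑ k ∈ range L, c (p + 1 + k) * u (p + t + 1 + k) :=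
    sum_congr rfl fun k _ => by rw [hgt _ (by omega), show p + 1 + k + t = p + t + 1 + k by omega]
  simp only [sum_range_add, sum_range_one, add_zero, hprefix, hsuffix, sub_mul, sum_sub_distrib,
    ← add_assoc]
  ring

theorem vt_sub_of_contract (L : ℕ) (hlt : ∀ k < p, w k = u k)
    (hgt : ∀ k, p < k → w k = u (k + t)) :
    ∑ k ∈ range (p + (t + 1) + L), ((k : R) + 1) * u k -
        ∑ k ∈ range (p + 1 + L), ((k : R) + 1) * w k =
      ((p : R) + 1) * (∑ r ∈ range (t + 1), u (p + r) - w p) +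
        ∑ r ∈ range (t + 1), (r : R) * u (p + r) + t * ∑ k ∈ range L, u (p + t + 1 + k) := by
  have hblock : ∑ r ∈ range (t + 1), (((p + r : ℕ) : R) + 1) * u (p + r) =
      ((p : R) + 1) * ∑ r ∈ range (t + 1), u (p + r) +
        ∑ r ∈ range (t + 1), (r : R) * u (p + r) := by
    rw [mul_sum, ← sum_add_distrib]
    exact sum_congr rfl fun r _ => by push_cast; ring
  have hshift : ∑ k ∈ range L, ((((p + t + 1 + k : ℕ) : R) + 1) - (((p + 1 + k : ℕ) : R) + 1)) *
      u (p + t + 1 + k) = t * ∑ k ∈ range L, u (p + t + 1 + k) := by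
    rw [mul_sum]
    exact sum_congr rfl fun k _ => by push_cast; ring
  rw [sum_range_mul_sub_of_contract u w _ L hlt hgt, hblock, hshift]
  ring

theorem sum_sub_of_contract (L : ℕ) (hlt : ∀ k < p, w k = u k)
    (hgt : ∀ k, p < k → w k = u (k + t)) :
    ∑ k ∈ range (p + (t + 1) + L), u k - ∑ k ∈ range (p + 1 + L), w k =
      ∑ r ∈ range (t + 1), u (p + r) - w p := by
  simpa using sum_range_mul_sub_of_contract u w (fun _ => 1) L hlt hgt

/-- Positions are 0-based: the block starts at `p`, so the paper's `i` is `p + 1` and its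
decoding position `j` is `p + 1 + d`. -/
theorem mul_window_eq_of_vt_sub_eq {m m' : ℕ} (d : ℕ) (hm : m = m' + t) (hd : p + 1 + d ≤ m')
    (hlt : ∀ k < p, w k = u k) (hgt : ∀ k, p < k → w k = u (k + t)) (σ : R)
    (h : ∑ k ∈ range m, ((k : R) + 1) * u k - ∑ k ∈ range m', ((k : R) + 1) * w k =
      ((p : R) + 1 + d) * (∑ k ∈ range m, u k - ∑ k ∈ range m', w k) + σ +
        t * ∑ k ∈ range (m' - (p + 1 + d)), w (p + 1 + d + k)) :
    t * ∑ k ∈ range d, u (p + t + 1 + k) =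
      d * (∑ r ∈ range (t + 1), u (p + r) - w p) + σ -
        ∑ r ∈ range (t + 1), (r : R) * u (p + r) := by
  obtain ⟨L, rfl⟩ : ∃ L, m' = p + 1 + (d + L) := ⟨m' - (p + 1 + d), by omega⟩
  have htail : ∑ k ∈ range (p + 1 + (d + L) - (p + 1 + d)), w (p + 1 + d + k) =
      ∑ k ∈ range L, u (p + t + 1 + d + k) := by
    rw [show p + 1 + (d + L) - (p + 1 + d) = L by omega]
    exact sum_congr rfl fun k _ => by
      rw [hgt _ (by omega), show p + 1 + d + k + t = p + t + 1 + d + k by omega]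
  rw [hm, show p + 1 + (d + L) + t = p + (t + 1) + (d + L) by omega, htail,
    vt_sub_of_contract u w _ hlt hgt, sum_sub_of_contract u w _ hlt hgt,
    sum_range_add (fun k => u (p + t + 1 + k))] at h
  simp only [← add_assoc] at h
  linear_combination h

end ContractionIdentity

theorem sum_range_mul_le_of_lt {q : ℕ} (t : ℕ) (v : ℕ → ℕ) (hv : ∀ r, v r < q) :
    ∑ r ∈ range (t + 1), (r : ℤ) * v r ≤ ((t * (t + 1) / 2 : ℕ) : ℤ) * ((q : ℤ) - 1) :=
  calc ∑ r ∈ range (t + 1), (r : ℤ) * v r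
      ≤ ∑ r ∈ range (t + 1), (r : ℤ) * ((q : ℤ) - 1) :=
        sum_le_sum fun r _ => mul_le_mul_of_nonneg_left (by linarith [hv r]) (by positivity)
    _ = ((t * (t + 1) / 2 : ℕ) : ℤ) * ((q : ℤ) - 1) := by
        rw [← sum_mul, ← Nat.cast_sum, sum_range_id, Nat.add_sub_cancel, mul_comm (t + 1)]

/-- Padding by zero makes `valSeq y' k = valSeq y (k + t')` hold for every `k` past the
contracted block, not only for `k` inside `y'`. -/
def valSeq {q m : ℕ} (y : Fin m → ZMod q) (k : ℕ) : ℕ :=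
  if h : k < m then (y ⟨k, h⟩).val else 0

section ValSeq

variable {q m : ℕ} (y : Fin m → ZMod q)

theorem valSeq_of_lt {k : ℕ} (h : k < m) : valSeq y k = (y ⟨k, h⟩).val := dif_pos h

theorem valSeq_of_le {k : ℕ} (h : m ≤ k) : valSeq y k = 0 := dif_neg (by omega)

theorem valSeq_lt [NeZero q] (k : ℕ) : valSeq y k < q := by
  unfold valSeq
  split
  · exact ZMod.val_lt _
  · exact Nat.pos_of_neZero q

theorem sum_fin_eq_sum_range_valSeq {M : Type*} [AddCommMonoid M] (f : ℕ → ℕ → M) :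
    ∑ k : Fin m, f k (y k).val = ∑ k ∈ range m, f k (valSeq y k) := by
  rw [← Fin.sum_univ_eq_sum_range (fun k => f k (valSeq y k))]
  simp only [valSeq_of_lt y (Fin.is_lt _)]

theorem L1_eq_sum_range : L1 y = ∑ k ∈ range m, valSeq y k :=
  sum_fin_eq_sum_range_valSeq y fun _ v => v

theorem VTsum_eq_sum_range : VTsum y = ∑ k ∈ range m, (k + 1) * valSeq y k :=
  sum_fin_eq_sum_range_valSeq y fun k v => (k + 1) * v

theorem wsub_eq_sum_range (a len : ℕ) (h : a + len ≤ m) :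
    wsub y a len h = ∑ k ∈ range len, valSeq y (a + k) := by
  rw [wsub, ← Fin.sum_univ_eq_sum_range (fun k => valSeq y (a + k))]
  exact sum_congr rfl fun k _ => (valSeq_of_lt y (by omega)).symm

theorem sum_ite_le_eq_sum_range (j : ℕ) :
    ∑ k : Fin m, (if j ≤ (k : ℕ) then ((y k).val : ℤ) else 0) =
      ∑ k ∈ range (m - j), (valSeq y (j + k) : ℤ) := by
  rw [sum_fin_eq_sum_range_valSeq y fun k v => if j ≤ k then (v : ℤ) else 0, ← sum_filter,
    ← sum_Ico_eq_sum_range (fun k => (valSeq y k : ℤ))]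
  congr 1
  ext k
  simp only [mem_filter, mem_range, mem_Ico]
  omega

end ValSeq

theorem valSeq_of_contract {q n t' i : ℕ} [NeZero q] (hi2 : i ≤ n + 1 - t')
    (y : Fin (n + 1) → ZMod q) (y' : Fin (n + 1 - t') → ZMod q)
    (hy' : ∀ k : Fin (n + 1 - t'),
      ((k : ℕ) + 1 < i → y' k = y ⟨(k : ℕ), by omega⟩) ∧
      ((k : ℕ) + 1 = i → y' k = ∑ r : Fin (t' + 1), y ⟨(k : ℕ) + (r : ℕ), by omega⟩) ∧
      (i < (k : ℕ) + 1 → y' k = y ⟨(k : ℕ) + t', by omega⟩)) :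
    (∀ k, k + 1 < i → valSeq y' k = valSeq y k) ∧
      (∀ k, k + 1 = i → valSeq y' k = (∑ r ∈ range (t' + 1), valSeq y (k + r)) % q) ∧
      (∀ k, i < k + 1 → valSeq y' k = valSeq y (k + t')) := by
  refine ⟨fun k hk => ?_, fun k hk => ?_, fun k hk => ?_⟩
  · have hk' : k < n + 1 - t' := by omega
    rw [valSeq_of_lt y' hk', valSeq_of_lt y (by omega), (hy' ⟨k, hk'⟩).1 hk]
  · have hk' : k < n + 1 - t' := by omega
    have hsum : ∑ r : Fin (t' + 1), y ⟨k + r, by omega⟩ =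
        ((∑ r ∈ range (t' + 1), valSeq y (k + r) : ℕ) : ZMod q) := by
      rw [← Fin.sum_univ_eq_sum_range (fun r => valSeq y (k + r)), Nat.cast_sum]
      exact sum_congr rfl fun r _ => by rw [valSeq_of_lt y (by omega), ZMod.natCast_zmod_val]
    rw [valSeq_of_lt y' hk', (hy' ⟨k, hk'⟩).2.1 hk, hsum, ZMod.val_natCast]
  · by_cases hk' : k < n + 1 - t'
    · rw [valSeq_of_lt y' hk', valSeq_of_lt y (by omega), (hy' ⟨k, hk'⟩).2.2 hk]
    · rw [valSeq_of_le y' (by omega), valSeq_of_le y (by omega)]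

theorem exists_window_identity {q n t' i j : ℕ} [NeZero q] (hi1 : 1 ≤ i) (hi2 : i ≤ n + 1 - t')
    (y : Fin (n + 1) → ZMod q) (y' : Fin (n + 1 - t') → ZMod q)
    (hy' : ∀ k : Fin (n + 1 - t'),
      ((k : ℕ) + 1 < i → y' k = y ⟨(k : ℕ), by omega⟩) ∧
      ((k : ℕ) + 1 = i → y' k = ∑ r : Fin (t' + 1), y ⟨(k : ℕ) + (r : ℕ), by omega⟩) ∧
      (i < (k : ℕ) + 1 → y' k = y ⟨(k : ℕ) + t', by omega⟩))
    (hij : i ≤ j) (hj : j ≤ n + 1 - t') (σ : ℤ)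
    (hjeq : (VTsum y : ℤ) - (VTsum y' : ℤ) =
      (j : ℤ) * ((L1 y : ℤ) - (L1 y' : ℤ)) + σ +
      (t' : ℤ) * ∑ k : Fin (n + 1 - t'), (if j ≤ (k : ℕ) then ((y' k).val : ℤ) else 0)) :
    ∃ a : ℕ, ∃ σ₀ : ℤ, 0 ≤ σ₀ ∧ σ₀ ≤ ((t' * (t' + 1) / 2 : ℕ) : ℤ) * ((q : ℤ) - 1) ∧
      (t' : ℤ) * wsub y (i + t') (j - i) (by omega) = ((j - i : ℕ) : ℤ) * (q * a) + σ - σ₀ := by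
  obtain ⟨hlt, hblock, hgt⟩ := valSeq_of_contract hi2 y y' hy'
  obtain ⟨p, rfl⟩ : ∃ p, i = p + 1 := ⟨i - 1, by omega⟩
  obtain ⟨d, rfl⟩ : ∃ d, j = p + 1 + d := ⟨j - (p + 1), by omega⟩
  obtain ⟨S, hS⟩ : ∃ S, ∑ r ∈ range (t' + 1), valSeq y (p + r) = S := ⟨_, rfl⟩
  refine ⟨S / q, ∑ r ∈ range (t' + 1), (r : ℤ) * valSeq y (p + r), by positivity,
    sum_range_mul_le_of_lt t' _ fun r => valSeq_lt y _, ?_⟩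
  rw [VTsum_eq_sum_range, VTsum_eq_sum_range, L1_eq_sum_range, L1_eq_sum_range,
    sum_ite_le_eq_sum_range] at hjeq
  push_cast at hjeq
  have hwindow := mul_window_eq_of_vt_sub_eq (fun k => (valSeq y k : ℤ))
    (fun k => (valSeq y' k : ℤ)) d (by omega) (by omega)
    (fun k hk => by simp only [hlt k (by omega)]) (fun k hk => by simp only [hgt k (by omega)])
    σ hjeq
  have hcarry : ∑ r ∈ range (t' + 1), (valSeq y (p + r) : ℤ) = q * (S / q : ℕ) + (S % q : ℕ) := by
    rw [← Nat.cast_sum, hS]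
    exact_mod_cast (Nat.div_add_mod S q).symm
  rw [hblock p rfl, hS] at hwindow
  rw [wsub_eq_sum_range, Nat.add_right_comm p 1 t', Nat.add_sub_cancel_left, Nat.cast_sum]
  linear_combination hwindow + (d : ℤ) * hcarry

section Balance

variable {q t s d a W σ σ₀ ε : ℝ}

theorem mul_le_of_le_carry (hq : 0 ≤ q) (ht : 0 ≤ t) (hd : 0 ≤ d) (hσ : 0 ≤ σ)
    (hσ₀ : 2 * σ₀ ≤ t * (t + 1) * (q - 1)) (hW : W ≤ ((q - 1) / 2 + ε) * d)
    (heq : t * W = d * (q * a) + σ - σ₀) (hsa : s ≤ a) :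
    d * (2 * s * q - t * (q - 1 + 2 * ε)) ≤ t * (t + 1) * (q - 1) := by
  nlinarith [mul_le_mul_of_nonneg_left hW ht, mul_nonneg (mul_nonneg hd hq) (sub_nonneg.2 hsa)]

theorem mul_le_of_carry_le (hq : 0 ≤ q) (ht : 0 ≤ t) (hd : 0 ≤ d)
    (hσ : 2 * σ ≤ t * (t + 1) * (q - 1)) (hσ₀ : 0 ≤ σ₀) (hW : ((q - 1) / 2 - ε) * d ≤ W)
    (heq : t * W = d * (q * a) + σ - σ₀) (has : a ≤ s - 1) :
    d * (t * (q - 1 - 2 * ε) - 2 * (s - 1) * q) ≤ t * (t + 1) * (q - 1) := by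
  nlinarith [mul_le_mul_of_nonneg_left hW ht, mul_nonneg (mul_nonneg hd hq) (sub_nonneg.2 has)]

end Balance

theorem two_mul_cast_le_of_le_triangle {x : ℤ} {t q : ℕ}
    (h : x ≤ ((t * (t + 1) / 2 : ℕ) : ℤ) * ((q : ℤ) - 1)) :
    2 * (x : ℝ) ≤ t * (t + 1) * (q - 1) := by
  have htri : ((t * (t + 1) / 2 : ℕ) : ℤ) * 2 = t * (t + 1) := by
    exact_mod_cast Nat.div_mul_cancel (Nat.even_mul_succ_self t).two_dvd
  have h2 : 2 * x ≤ t * (t + 1) * (q - 1) := by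
    rw [← htri]
    linarith
  exact_mod_cast h2

noncomputable def Mterm₁ (q : ℕ) (ε : ℝ) (t' s : ℕ) : ℝ :=
  (t' : ℝ) * ((t' : ℝ) + 1) * ((q : ℝ) - 1) /
    (2 * (s : ℝ) * (q : ℝ) - (t' : ℝ) * ((q : ℝ) - 1 + 2 * ε))

noncomputable def Mterm₂ (q : ℕ) (ε : ℝ) (t' s : ℕ) : ℝ :=
  (t' : ℝ) * ((t' : ℝ) + 1) * ((q : ℝ) - 1) /
    ((t' : ℝ) * ((q : ℝ) - 1 - 2 * ε) - 2 * ((s : ℝ) - 1) * (q : ℝ))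

section GoodTriple

variable {q t t' s : ℕ} {ε : ℝ}

theorem Mterm_le_Mval (ht2 : 2 ≤ t') (htt : t' ≤ t) (hs1 : 1 ≤ s) (hs2 : s ≤ t')
    (hlo : (t' : ℝ) / 2 - (1 - 2 * ε) * (t' : ℝ) / (2 * (q : ℝ)) < (s : ℝ))
    (hhi : (s : ℝ) < (t' : ℝ) / 2 + 1 - (1 + 2 * ε) * (t' : ℝ) / (2 * (q : ℝ))) :
    Mterm₁ q ε t' s ≤ Mval q t ε ∧ Mterm₂ q ε t' s ≤ Mval q t ε := by
  have hbdd : BddAbove {M : ℝ | ∃ t' s : ℕ, 2 ≤ t' ∧ t' ≤ t ∧ 1 ≤ s ∧ s ≤ t' ∧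
      ((t' : ℝ) / 2 - (1 - 2 * ε) * (t' : ℝ) / (2 * (q : ℝ)) < (s : ℝ) ∧
        (s : ℝ) < (t' : ℝ) / 2 + 1 - (1 + 2 * ε) * (t' : ℝ) / (2 * (q : ℝ))) ∧
      (M = Mterm₁ q ε t' s ∨ M = Mterm₂ q ε t' s)} := by
    refine (Set.Finite.subset ((range (t + 1)).finite_toSet.biUnion fun t' _ =>
      (range (t + 1)).finite_toSet.biUnion fun s _ =>
        Set.toFinite {Mterm₁ q ε t' s, Mterm₂ q ε t' s}) ?_).bddAbove
    rintro M ⟨t₀, s₀, -, ht₀, -, hs₀, -, hM⟩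
    simp only [Set.mem_iUnion, mem_coe, mem_range]
    exact ⟨t₀, by omega, s₀, by omega, hM⟩
  exact ⟨le_csSup hbdd ⟨t', s, ht2, htt, hs1, hs2, ⟨hlo, hhi⟩, Or.inl rfl⟩,
    le_csSup hbdd ⟨t', s, ht2, htt, hs1, hs2, ⟨hlo, hhi⟩, Or.inr rfl⟩⟩

theorem Mterm₁_denom_pos (hq : 0 < q)
    (hlo : (t' : ℝ) / 2 - (1 - 2 * ε) * (t' : ℝ) / (2 * (q : ℝ)) < (s : ℝ)) :
    0 < 2 * (s : ℝ) * q - t' * (q - 1 + 2 * ε) := by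
  have hq' : (0 : ℝ) < 2 * q := by positivity
  have hcancel := div_mul_cancel₀ ((1 - 2 * ε) * (t' : ℝ)) hq'.ne'
  nlinarith [mul_lt_mul_of_pos_right hlo hq']

theorem Mterm₂_denom_pos (hq : 0 < q)
    (hhi : (s : ℝ) < (t' : ℝ) / 2 + 1 - (1 + 2 * ε) * (t' : ℝ) / (2 * (q : ℝ))) :
    0 < t' * ((q : ℝ) - 1 - 2 * ε) - 2 * ((s : ℝ) - 1) * q := by
  have hq' : (0 : ℝ) < 2 * q := by positivity
  have hcancel := div_mul_cancel₀ ((1 + 2 * ε) * (t' : ℝ)) hq'.ne'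
  nlinarith [mul_lt_mul_of_pos_right hhi hq']

theorem le_Mval_of_window_eq {d a : ℕ} {W σ σ₀ : ℝ} (hq : 0 < q) (hgood : GoodTriple q t ε)
    (ht2 : 2 ≤ t') (htt : t' ≤ t) (hσ : 0 ≤ σ) (hσ' : 2 * σ ≤ t' * (t' + 1) * (q - 1))
    (hσ₀ : 0 ≤ σ₀) (hσ₀' : 2 * σ₀ ≤ t' * (t' + 1) * (q - 1))
    (hW : (((q : ℝ) - 1) / 2 - ε) * d ≤ W ∧ W ≤ (((q : ℝ) - 1) / 2 + ε) * d)
    (heq : t' * W = d * (q * a) + σ - σ₀) :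
    (d : ℝ) ≤ Mval q t ε := by
  obtain ⟨s, hs1, hs2, hlo, hhi⟩ := hgood t' ht2 htt
  obtain ⟨h₁, h₂⟩ := Mterm_le_Mval ht2 htt hs1 hs2 hlo hhi
  rcases le_or_gt s a with hsa | has
  · refine le_trans ?_ h₁
    rw [Mterm₁, le_div_iff₀ (Mterm₁_denom_pos hq hlo)]
    exact mul_le_of_le_carry (by positivity) (by positivity) (by positivity) hσ hσ₀' hW.2 heq
      (by exact_mod_cast hsa)
  · refine le_trans ?_ h₂
    rw [Mterm₂, le_div_iff₀ (Mterm₂_denom_pos hq hhi)]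
    have has' : (a : ℝ) + 1 ≤ s := by exact_mod_cast has
    exact mul_le_of_carry_le (by positivity) (by positivity) (by positivity) hσ' hσ₀ hW.1 heq
      (by linarith)

end GoodTriple

/-- If `y'` is obtained from the strong-(ℓ,ε)-locally-balanced `y ∈ Σ_q^{n+1}` by
replacing the substring `y_{[i,i+t']}` (1-based) with the single symbol
`(Σ_{k=i}^{i+t'} y_k) mod q`, and `j ≥ i` satisfies the displayed VT equation for
some `σ ∈ [0, (t'(t'+1)/2)(q-1)]`, then `j - i < ℓ`. -/
theorem stmt12 (q t t' n : ℕ) (hq : 2 ≤ q) (ht2 : 2 ≤ t') (htt : t' ≤ t)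
    (ε : ℝ) (hgood : GoodTriple q t ε)
    (ℓ : ℕ) (hℓ : Mval q t ε < (ℓ : ℝ))
    (y : Fin (n + 1) → ZMod q) (hy : StrongLB y ℓ ε)
    (i : ℕ) (hi1 : 1 ≤ i) (hi2 : i ≤ n + 1 - t')
    (y' : Fin (n + 1 - t') → ZMod q)
    (hy' : ∀ k : Fin (n + 1 - t'),
      ((k : ℕ) + 1 < i → y' k = y ⟨(k : ℕ), by omega⟩) ∧
      ((k : ℕ) + 1 = i → y' k = ∑ r : Fin (t' + 1), y ⟨(k : ℕ) + (r : ℕ), by omega⟩) ∧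
      (i < (k : ℕ) + 1 → y' k = y ⟨(k : ℕ) + t', by omega⟩))
    (j : ℕ) (hij : i ≤ j) (hj : j ≤ n + 1 - t')
    (σ : ℤ) (hσ0 : 0 ≤ σ) (hσ1 : σ ≤ ((t' * (t' + 1) / 2 : ℕ) : ℤ) * ((q : ℤ) - 1))
    (hjeq : (VTsum y : ℤ) - (VTsum y' : ℤ) =
      (j : ℤ) * ((L1 y : ℤ) - (L1 y' : ℤ)) + σ +
      (t' : ℤ) * ∑ k : Fin (n + 1 - t'), (if j ≤ (k : ℕ) then ((y' k).val : ℤ) else 0)) :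
    j - i < ℓ := by
  by_contra! hlong
  have : NeZero q := ⟨by omega⟩
  obtain ⟨a, σ₀, hσ₀0, hσ₀1, heq⟩ := exists_window_identity hi1 hi2 y y' hy' hij hj σ hjeq
  have hd := le_Mval_of_window_eq (W := (wsub y (i + t') (j - i) (by omega) : ℝ)) (a := a)
    (by omega) hgood ht2 htt (by exact_mod_cast hσ0) (two_mul_cast_le_of_le_triangle hσ1)
    (by exact_mod_cast hσ₀0) (two_mul_cast_le_of_le_triangle hσ₀1)
    (hy (i + t') (j - i) hlong (by omega)) (by exact_mod_cast heq)
  have hℓd : (ℓ : ℝ) ≤ (j - i : ℕ) := by exact_mod_cast hlong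
  linarith
end

section
/- Let q ≥ 2 be an integer and let 0 < η₁, η₂ < (q−1)/2 be reals satisfying η₁ − η₁²/((q−1)s) + (q−1)/(4s) ≤ η₂ < (q−1)/2 for some real s ≥ 1. Let ℓ₁ ≤ n be positive integers and suppose x ∈ Σ_q^n has the property that every substring of x of length exactly ℓ₁ has L1-weight in the interval [((q−1)/2 − η₁)ℓ₁, ((q−1)/2 + η₁)ℓ₁]. Then x is strong-(ℓ,η₂)-locally-balanced for every integer ℓ with sℓ₁ ≤ ℓ ≤ n. -/
open Finset

section WindowSums

variable {g : ℕ → ℝ} {c η₁ : ℝ}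

lemma abs_sum_Ico_le (hg : ∀ i, |g i| ≤ c) (a len : ℕ) :
    |∑ i ∈ Ico a (a + len), g i| ≤ c * len := by
  calc |∑ i ∈ Ico a (a + len), g i| ≤ ∑ i ∈ Ico a (a + len), |g i| := abs_sum_le_sum_abs _ _
    _ ≤ (Ico a (a + len)).card • c := sum_le_card_nsmul _ _ _ fun i _ => hg i
    _ = c * len := by simp [mul_comm]

lemma sum_Ico_mul_le {η : ℝ} {ℓ₁ n : ℕ}
    (hblock : ∀ b, b + ℓ₁ ≤ n → ∑ i ∈ Ico b (b + ℓ₁), g i ≤ η * ℓ₁) (a : ℕ) :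
    ∀ k, a + ℓ₁ * k ≤ n → ∑ i ∈ Ico a (a + ℓ₁ * k), g i ≤ η * (ℓ₁ * k : ℕ)
  | 0, _ => by simp
  | k + 1, h => by
    rw [← sum_Ico_consecutive g (Nat.le_add_right a (ℓ₁ * k))
      (by rw [mul_add_one]; omega), mul_add_one, ← add_assoc]
    have hhead := sum_Ico_mul_le hblock a k (by rw [mul_add_one] at h; omega)
    have hlast := hblock (a + ℓ₁ * k) (by rw [mul_add_one] at h; omega)
    push_cast at hhead ⊢
    linarith

lemma two_mul_sum_Ico_head_sub_le (hg : ∀ i, |g i| ≤ c) (hη₁ : |η₁| ≤ c) {b r t : ℕ}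
    (hblock : ∑ i ∈ Ico b (b + r + t), g i ≤ η₁ * (r + t)) :
    2 * c * (∑ i ∈ Ico b (b + r), g i - η₁ * r) ≤ (c ^ 2 - η₁ ^ 2) * (r + t) := by
  rw [← sum_Ico_consecutive g (Nat.le_add_right b r) (Nat.le_add_right _ t)] at hblock
  have hhead := abs_le.mp (abs_sum_Ico_le hg b r)
  have hrest := abs_le.mp (abs_sum_Ico_le hg (b + r) t)
  obtain ⟨hη₁l, hη₁u⟩ := abs_le.mp hη₁
  have hbySymbols : ∑ i ∈ Ico b (b + r), g i - η₁ * r ≤ (c - η₁) * r := by linarith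
  have hbyBlock : ∑ i ∈ Ico b (b + r), g i - η₁ * r ≤ (c + η₁) * t := by linarith
  linarith [mul_le_mul_of_nonneg_left hbySymbols (by linarith : 0 ≤ c + η₁),
    mul_le_mul_of_nonneg_left hbyBlock (by linarith : 0 ≤ c - η₁)]

variable {η₂ s : ℝ} {ℓ₁ n : ℕ}

theorem sum_Ico_le_of_forall_sum_Ico_le (hc : 0 < c) (hg : ∀ i, |g i| ≤ c) (hη₁ : |η₁| ≤ c)
    (hs : 1 ≤ s) (hcond : c ^ 2 - η₁ ^ 2 ≤ 2 * c * s * (η₂ - η₁)) (hℓ₁ : 0 < ℓ₁)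
    (hblock : ∀ b, b + ℓ₁ ≤ n → ∑ i ∈ Ico b (b + ℓ₁), g i ≤ η₁ * ℓ₁)
    {a len : ℕ} (hlen : s * ℓ₁ ≤ len) (h : a + len ≤ n) :
    ∑ i ∈ Ico a (a + len), g i ≤ η₂ * len := by
  obtain ⟨k, r, hr, rfl⟩ : ∃ k r, r < ℓ₁ ∧ len = r + ℓ₁ * k :=
    ⟨len / ℓ₁, len % ℓ₁, Nat.mod_lt _ hℓ₁, (Nat.mod_add_div _ _).symm⟩
  obtain ⟨t, ht⟩ : ∃ t, ℓ₁ = r + t := ⟨ℓ₁ - r, by omega⟩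
  have hℓ₁s : (ℓ₁ : ℝ) ≤ s * ℓ₁ := le_mul_of_one_le_left (Nat.cast_nonneg _) hs
  have hℓ₁len : ℓ₁ ≤ r + ℓ₁ * k := by exact_mod_cast hℓ₁s.trans hlen
  have hhead := two_mul_sum_Ico_head_sub_le hg hη₁ (b := a) (r := r) (t := t) (by
    have := hblock a (by omega)
    rwa [ht, ← add_assoc, Nat.cast_add] at this)
  rw [← Nat.cast_add, ← ht] at hhead
  have hblocks := sum_Ico_mul_le hblock (a + r) k (by omega)
  have hgap : 0 ≤ η₂ - η₁ := by
    obtain ⟨hη₁l, hη₁u⟩ := abs_le.mp hη₁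
    nlinarith [mul_pos hc (by linarith : (0 : ℝ) < s)]
  rw [← add_assoc, ← sum_Ico_consecutive g (Nat.le_add_right a r) (Nat.le_add_right _ _)]
  push_cast at hblocks hlen ⊢
  have hexcess : 2 * c * (∑ i ∈ Ico a (a + r), g i + ∑ i ∈ Ico (a + r) (a + r + ℓ₁ * k), g i
      - η₂ * (r + ℓ₁ * k)) ≤ 0 := by
    linarith [mul_le_mul_of_nonneg_left hblocks (by linarith : 0 ≤ 2 * c),
      mul_le_mul_of_nonneg_right hcond (Nat.cast_nonneg ℓ₁ : (0 : ℝ) ≤ ℓ₁),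
      mul_le_mul_of_nonneg_left hlen (by positivity : 0 ≤ 2 * c * (η₂ - η₁))]
  linarith [nonpos_of_mul_nonpos_right hexcess (by linarith : 0 < 2 * c)]

theorem abs_sum_Ico_le_of_forall_abs_sum_Ico_le (hc : 0 < c) (hg : ∀ i, |g i| ≤ c)
    (hη₁ : |η₁| ≤ c) (hs : 1 ≤ s) (hcond : c ^ 2 - η₁ ^ 2 ≤ 2 * c * s * (η₂ - η₁))
    (hℓ₁ : 0 < ℓ₁) (hblock : ∀ b, b + ℓ₁ ≤ n → |∑ i ∈ Ico b (b + ℓ₁), g i| ≤ η₁ * ℓ₁)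
    {a len : ℕ} (hlen : s * ℓ₁ ≤ len) (h : a + len ≤ n) :
    |∑ i ∈ Ico a (a + len), g i| ≤ η₂ * len := by
  refine abs_le'.mpr ⟨?_, ?_⟩
  · exact sum_Ico_le_of_forall_sum_Ico_le hc hg hη₁ hs hcond hℓ₁
      (fun b hb => (abs_le'.mp (hblock b hb)).1) hlen h
  · rw [← sum_neg_distrib]
    exact sum_Ico_le_of_forall_sum_Ico_le hc (fun i => (abs_neg (g i)).trans_le (hg i)) hη₁ hs
      hcond hℓ₁ (fun b hb => by simpa using (abs_le'.mp (hblock b hb)).2) hlen h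

end WindowSums

section Sequences

variable {q m : ℕ}

def symbolAt (y : Fin m → ZMod q) (i : ℕ) : ℝ :=
  if hi : i < m then (y ⟨i, hi⟩).val else 0

lemma symbolAt_nonneg (y : Fin m → ZMod q) (i : ℕ) : 0 ≤ symbolAt y i := by
  unfold symbolAt
  split <;> positivity

lemma symbolAt_le [NeZero q] (y : Fin m → ZMod q) (i : ℕ) : symbolAt y i ≤ (q : ℝ) - 1 := by
  have hq : (1 : ℝ) ≤ q := by exact_mod_cast NeZero.one_le
  unfold symbolAt
  split
  · rw [le_sub_iff_add_le]
    exact_mod_cast ZMod.val_lt _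
  · linarith

lemma wsub_sub_eq_sum_Ico (y : Fin m → ZMod q) (c : ℝ) (a len : ℕ) (h : a + len ≤ m) :
    (wsub y a len h : ℝ) - c * len = ∑ i ∈ Ico a (a + len), (symbolAt y i - c) := by
  rw [sum_Ico_eq_sum_range, add_tsub_cancel_left, sum_sub_distrib, sum_const, card_range,
    nsmul_eq_mul, mul_comm, ← Fin.sum_univ_eq_sum_range, wsub, Nat.cast_sum]
  congr 1
  exact Fintype.sum_congr _ _ fun i => by simp [symbolAt, show a + (i : ℕ) < m by omega]

lemma strongLB_of_abs_sub_le (y : Fin m → ZMod q) (ℓ : ℕ) (ε : ℝ)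
    (h : ∀ a len, ℓ ≤ len → ∀ h : a + len ≤ m,
      |(wsub y a len h : ℝ) - ((q : ℝ) - 1) / 2 * len| ≤ ε * len) :
    StrongLB y ℓ ε := fun a len hlen hm => by
  have := abs_le.mp (h a len hlen hm)
  constructor <;> linarith

end Sequences

theorem stmt16_general (q : ℕ) (hq : 2 ≤ q) (η₁ η₂ s : ℝ) (hs : 1 ≤ s)
    (hη₁0 : 0 < η₁) (hη₁ : η₁ < ((q : ℝ) - 1) / 2)
    (hcond : η₁ - η₁ ^ 2 / (((q : ℝ) - 1) * s) + ((q : ℝ) - 1) / (4 * s) ≤ η₂)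
    (ℓ₁ n : ℕ) (hℓ₁ : 1 ≤ ℓ₁)
    (x : Fin n → ZMod q)
    (hx : ∀ a : ℕ, ∀ h : a + ℓ₁ ≤ n,
      (((q : ℝ) - 1) / 2 - η₁) * (ℓ₁ : ℝ) ≤ (wsub x a ℓ₁ h : ℝ) ∧
      (wsub x a ℓ₁ h : ℝ) ≤ (((q : ℝ) - 1) / 2 + η₁) * (ℓ₁ : ℝ))
    (ℓ : ℕ) (hℓ : s * (ℓ₁ : ℝ) ≤ (ℓ : ℝ)) :
    StrongLB x ℓ η₂ := by
  have : NeZero q := ⟨by omega⟩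
  set c := ((q : ℝ) - 1) / 2 with hc_def
  have hc : 0 < c := by
    have : (2 : ℝ) ≤ q := by exact_mod_cast hq
    linarith
  have hg : ∀ i, |symbolAt x i - c| ≤ c := fun i =>
    abs_sub_le_iff.mpr ⟨by linarith [symbolAt_le x i], by linarith [symbolAt_nonneg x i]⟩
  have hcond' : c ^ 2 - η₁ ^ 2 ≤ 2 * c * s * (η₂ - η₁) := by
    rw [show (q : ℝ) - 1 = 2 * c by ring] at hcond
    field_simp at hcond
    nlinarith
  refine strongLB_of_abs_sub_le x ℓ η₂ fun a len hlen h => ?_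
  rw [wsub_sub_eq_sum_Ico]
  refine abs_sum_Ico_le_of_forall_abs_sum_Ico_le hc hg (abs_le.mpr ⟨by linarith, hη₁.le⟩) hs
    hcond' hℓ₁ (fun b hb => ?_) (hℓ.trans (by exact_mod_cast hlen)) h
  rw [← wsub_sub_eq_sum_Ico x c b ℓ₁ hb]
  exact abs_sub_le_iff.mpr ⟨by linarith [(hx b hb).2], by linarith [(hx b hb).1]⟩

theorem stmt16 (q : ℕ) (hq : 2 ≤ q) (η₁ η₂ s : ℝ) (hs : 1 ≤ s)
    (hη₁0 : 0 < η₁) (hη₁ : η₁ < ((q : ℝ) - 1) / 2)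
    (hη₂0 : 0 < η₂) (hη₂ : η₂ < ((q : ℝ) - 1) / 2)
    (hcond : η₁ - η₁ ^ 2 / (((q : ℝ) - 1) * s) + ((q : ℝ) - 1) / (4 * s) ≤ η₂)
    (ℓ₁ n : ℕ) (hℓ₁ : 1 ≤ ℓ₁) (hℓ₁n : ℓ₁ ≤ n)
    (x : Fin n → ZMod q)
    (hx : ∀ a : ℕ, ∀ h : a + ℓ₁ ≤ n,
      (((q : ℝ) - 1) / 2 - η₁) * (ℓ₁ : ℝ) ≤ (wsub x a ℓ₁ h : ℝ) ∧
      (wsub x a ℓ₁ h : ℝ) ≤ (((q : ℝ) - 1) / 2 + η₁) * (ℓ₁ : ℝ))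
    (ℓ : ℕ) (hℓ : s * (ℓ₁ : ℝ) ≤ (ℓ : ℝ)) (hℓn : ℓ ≤ n) :
    StrongLB x ℓ η₂ :=
  stmt16_general q hq η₁ η₂ s hs hη₁0 hη₁ hcond ℓ₁ n hℓ₁ x hx ℓ hℓ
end

section
/- Let q ≥ 2 be an integer and let 0 < ε₁ < ε₂ < (q−1)/2 be reals. Let m be an integer large enough that (ε₂ − ε₁)m ≥ (q−1)/2 − ε₁. Suppose u ∈ Σ_q^n is strong-(m−1,ε₁)-locally-balanced. Then for every symbol a ∈ Σ_q, both the sequence u a (u with a appended at the end) and the sequence a u (u with a prepended) are strong-(m,ε₂)-locally-balanced. -/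
/-! A substring of length `≥ m` of `u a` or `a u` either is a substring of `u`, where relaxing
`ε₁` to `ε₂` suffices, or consists of a substring of `u` of length `k ≥ m - 1` and the new symbol.
In the latter case the weight deviates from `(q - 1)/2 · (k + 1)` by at most
`ε₁ k + (q - 1)/2 = ε₁ (k + 1) + ((q - 1)/2 - ε₁)`, and the hypothesis on `m` says exactly that
the extra `(q - 1)/2 - ε₁` fits into the wider band `ε₂ (k + 1)`. -/

section Weight

variable {q n : ℕ} (u : Fin n → ZMod q) (a : ZMod q)

theorem wsub_snoc_of_le {s len : ℕ} (h : s + len ≤ n) (h' : s + len ≤ n + 1) :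
    wsub (Fin.snoc u a : Fin (n + 1) → ZMod q) s len h' = wsub u s len h := by
  unfold wsub
  refine Finset.sum_congr rfl fun i _ => ?_
  exact congrArg ZMod.val (Fin.snoc_castSucc (α := fun _ => ZMod q) (i := ⟨s + i, by omega⟩) ..)

theorem wsub_snoc_last {s k : ℕ} (hsk : s + k = n) (h' : s + (k + 1) ≤ n + 1) :
    wsub (Fin.snoc u a : Fin (n + 1) → ZMod q) s (k + 1) h' = wsub u s k (by omega) + a.val := by
  rw [wsub, Fin.sum_univ_castSucc, ← wsub_snoc_of_le u a (by omega) (by omega), wsub]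
  have hlast : (⟨s + (Fin.last k : ℕ), by omega⟩ : Fin (n + 1)) = Fin.last n := by
    ext; simp [hsk]
  simp only [Fin.val_castSucc, hlast, Fin.snoc_last]

theorem wsub_cons_succ {t len : ℕ} (h : t + len ≤ n) (h' : t + 1 + len ≤ n + 1) :
    wsub (Fin.cons a u : Fin (n + 1) → ZMod q) (t + 1) len h' = wsub u t len h := by
  unfold wsub
  refine Finset.sum_congr rfl fun i _ => ?_
  have hsucc : (⟨t + 1 + i, by omega⟩ : Fin (n + 1)) = Fin.succ ⟨t + i, by omega⟩ := by
    ext; simp; omega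
  rw [hsucc, Fin.cons_succ]

theorem wsub_cons_zero {k : ℕ} (h : 0 + k ≤ n) (h' : 0 + (k + 1) ≤ n + 1) :
    wsub (Fin.cons a u : Fin (n + 1) → ZMod q) 0 (k + 1) h' = a.val + wsub u 0 k h := by
  rw [wsub, Fin.sum_univ_succ]
  rfl

end Weight

/-- `StrongLB y ℓ ε` unfolds to `∀ s len, ℓ ≤ len → ∀ h, BalancedWeight q ε len (wsub y s len h)`. -/
def BalancedWeight (q : ℕ) (ε : ℝ) (len : ℕ) (w : ℝ) : Prop :=
  (((q : ℝ) - 1) / 2 - ε) * len ≤ w ∧ w ≤ (((q : ℝ) - 1) / 2 + ε) * len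

namespace BalancedWeight

variable {q : ℕ} {ε₁ ε₂ w : ℝ}

theorem mono {len : ℕ} (h : BalancedWeight q ε₁ len w) (hε : ε₁ ≤ ε₂) :
    BalancedWeight q ε₂ len w := by
  have hlen : (0 : ℝ) ≤ len := len.cast_nonneg
  constructor <;> nlinarith [h.1, h.2]

theorem add_symbol {m k : ℕ} {A : ℝ} (h : BalancedWeight q ε₁ k w) (hA₀ : 0 ≤ A)
    (hA : A ≤ q - 1) (hε : ε₁ ≤ ε₂) (hm : ((q : ℝ) - 1) / 2 - ε₁ ≤ (ε₂ - ε₁) * m)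
    (hmk : m ≤ k + 1) : BalancedWeight q ε₂ (k + 1) (w + A) := by
  have hmk' : ((ε₂ - ε₁) * m : ℝ) ≤ (ε₂ - ε₁) * (k + 1) :=
    mul_le_mul_of_nonneg_left (by exact_mod_cast hmk) (sub_nonneg.2 hε)
  obtain ⟨hlo, hhi⟩ := h
  rw [BalancedWeight, Nat.cast_succ]
  constructor <;> nlinarith

end BalancedWeight

theorem ZMod.cast_val_le_sub_one {q : ℕ} [NeZero q] (a : ZMod q) : (a.val : ℝ) ≤ q - 1 := by
  have : (a.val : ℝ) + 1 ≤ q := by exact_mod_cast a.val_lt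
  linarith

namespace StrongLB

variable {q n m : ℕ} [NeZero q] {ε₁ ε₂ : ℝ} {u : Fin n → ZMod q}

theorem snoc (hu : StrongLB u (m - 1) ε₁) (hε : ε₁ ≤ ε₂)
    (hm : ((q : ℝ) - 1) / 2 - ε₁ ≤ (ε₂ - ε₁) * m) (a : ZMod q) :
    StrongLB (Fin.snoc u a : Fin (n + 1) → ZMod q) m ε₂ := by
  intro s len hlen h
  change BalancedWeight q ε₂ len _
  rcases len with _ | k
  · simp [BalancedWeight, wsub]
  obtain hs | hsk : s + (k + 1) ≤ n ∨ s + k = n := by omega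
  · rw [wsub_snoc_of_le u a hs]
    exact BalancedWeight.mono (hu s (k + 1) (by omega) hs) hε
  · rw [wsub_snoc_last u a hsk, Nat.cast_add]
    exact BalancedWeight.add_symbol (hu s k (by omega) (by omega)) (Nat.cast_nonneg _)
      a.cast_val_le_sub_one hε hm hlen

theorem cons (hu : StrongLB u (m - 1) ε₁) (hε : ε₁ ≤ ε₂)
    (hm : ((q : ℝ) - 1) / 2 - ε₁ ≤ (ε₂ - ε₁) * m) (a : ZMod q) :
    StrongLB (Fin.cons a u : Fin (n + 1) → ZMod q) m ε₂ := by
  intro s len hlen h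
  change BalancedWeight q ε₂ len _
  rcases len with _ | k
  · simp [BalancedWeight, wsub]
  rcases s with _ | t
  · rw [wsub_cons_zero u a (by omega), Nat.cast_add, add_comm (a.val : ℝ)]
    exact BalancedWeight.add_symbol (hu 0 k (by omega) (by omega)) (Nat.cast_nonneg _)
      a.cast_val_le_sub_one hε hm hlen
  · rw [wsub_cons_succ u a (by omega)]
    exact BalancedWeight.mono (hu t (k + 1) (by omega) (by omega)) hε

end StrongLB

theorem stmt17_general (q : ℕ) (hq : 2 ≤ q) (ε₁ ε₂ : ℝ)
    (hε₁₂ : ε₁ < ε₂)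
    (m : ℕ) (hm : ((q : ℝ) - 1) / 2 - ε₁ ≤ (ε₂ - ε₁) * (m : ℝ))
    (n : ℕ) (u : Fin n → ZMod q) (hu : StrongLB u (m - 1) ε₁) (a : ZMod q) :
    StrongLB (Fin.snoc u a) m ε₂ ∧ StrongLB (Fin.cons a u) m ε₂ := by
  have : NeZero q := ⟨by omega⟩
  exact ⟨hu.snoc hε₁₂.le hm a, hu.cons hε₁₂.le hm a⟩

theorem stmt17 (q : ℕ) (hq : 2 ≤ q) (ε₁ ε₂ : ℝ)
    (hε₁0 : 0 < ε₁) (hε₁₂ : ε₁ < ε₂) (hε₂ : ε₂ < ((q : ℝ) - 1) / 2)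
    (m : ℕ) (hm : ((q : ℝ) - 1) / 2 - ε₁ ≤ (ε₂ - ε₁) * (m : ℝ))
    (n : ℕ) (u : Fin n → ZMod q) (hu : StrongLB u (m - 1) ε₁) (a : ZMod q) :
    StrongLB (Fin.snoc u a) m ε₂ ∧ StrongLB (Fin.cons a u) m ε₂ :=
  stmt17_general q hq ε₁ ε₂ hε₁₂ m hm n u hu a
end

section
/- Let q ≥ 2 be an integer and 0 < ε₀ < (q−1)/2. If m is an integer with m ≥ max{ 2q/(q−1), ((q−1)²/ε₀²)·ln m }, then the number of sequences y ∈ Σ_q^m whose L1-weight Sum(y) lies in the interval [((q−1)/2 − ε₀)m, ((q−1)/2 + ε₀)m] is at least q^{m−1}. -/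
open Finset

section SecondMoment

variable {α : Type*} [Fintype α]

theorem card_mul_sum_sq_sum_apply (c : α → ℝ) (hc : ∑ a, c a = 0) (k : ℕ) :
    Fintype.card α * ∑ y : Fin k → α, (∑ i, c (y i)) ^ 2 =
      k * Fintype.card α ^ k * ∑ a, c a ^ 2 := by
  induction k with
  | zero => simp
  | succ k ih =>
    have hsplit : ∑ y : Fin (k + 1) → α, (∑ i, c (y i)) ^ 2 =
        ∑ a, ∑ z : Fin k → α, (c a + ∑ i, c (z i)) ^ 2 := by
      rw [← (Fin.consEquiv fun _ => α).sum_comp, Fintype.sum_prod_type]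
      simp [Fin.consEquiv, Fin.sum_univ_succ]
    have hexpand : ∀ a, ∑ z : Fin k → α, (c a + ∑ i, c (z i)) ^ 2 =
        Fintype.card α ^ k * c a ^ 2 + 2 * c a * ∑ z : Fin k → α, ∑ i, c (z i) +
          ∑ z : Fin k → α, (∑ i, c (z i)) ^ 2 := by
      intro a
      simp only [add_sq, sum_add_distrib, ← mul_sum, sum_const, card_univ, Fintype.card_fun,
        Fintype.card_fin, nsmul_eq_mul]
      push_cast
      ring
    simp only [hsplit, hexpand, sum_add_distrib, ← sum_mul, ← mul_sum, hc, mul_zero, zero_mul,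
      add_zero, sum_const, card_univ, nsmul_eq_mul]
    push_cast
    linear_combination (Fintype.card α : ℝ) * ih

end SecondMoment

theorem card_filter_le_abs_mul_sq_le {ι : Type*} (s : Finset ι) (f : ι → ℝ) {t : ℝ}
    (ht : 0 ≤ t) : #{x ∈ s | t ≤ |f x|} * t ^ 2 ≤ ∑ x ∈ s, f x ^ 2 :=
  calc #{x ∈ s | t ≤ |f x|} * t ^ 2 = ∑ x ∈ s with t ≤ |f x|, t ^ 2 := by
        rw [sum_const, nsmul_eq_mul]
    _ ≤ ∑ x ∈ s with t ≤ |f x|, f x ^ 2 := sum_le_sum fun x hx => by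
        simpa only [sq_abs] using pow_le_pow_left₀ ht (mem_filter.1 hx).2 2
    _ ≤ ∑ x ∈ s, f x ^ 2 :=
        sum_le_sum_of_subset_of_nonneg (filter_subset _ _) fun x _ _ => sq_nonneg _

theorem card_abs_sum_apply_ge_mul_sq_le {α : Type*} [Fintype α] [Nonempty α] (c : α → ℝ)
    (hc : ∑ a, c a = 0) {b : ℝ} (hb : ∀ a, |c a| ≤ b) (k : ℕ) {t : ℝ} (ht : 0 ≤ t) :
    #{y : Fin k → α | t ≤ |∑ i, c (y i)|} * t ^ 2 ≤ k * b ^ 2 * Fintype.card α ^ k := by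
  have hcard : (0 : ℝ) < Fintype.card α := by exact_mod_cast Fintype.card_pos
  have hsq : ∑ a, c a ^ 2 ≤ Fintype.card α * b ^ 2 := by
    simpa using sum_le_card_nsmul univ (fun a => c a ^ 2) (b ^ 2) fun a _ =>
      by simpa only [sq_abs] using pow_le_pow_left₀ (abs_nonneg _) (hb a) 2
  refine (card_filter_le_abs_mul_sq_le _ _ ht).trans (le_of_mul_le_mul_left ?_ hcard)
  rw [card_mul_sum_sq_sum_apply c hc k]
  calc (k : ℝ) * Fintype.card α ^ k * ∑ a, c a ^ 2
      ≤ k * Fintype.card α ^ k * (Fintype.card α * b ^ 2) := by gcongr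
    _ = Fintype.card α * (k * b ^ 2 * Fintype.card α ^ k) := by ring

section CenteredVal

variable {q : ℕ}

noncomputable def centeredVal (a : ZMod q) : ℝ := a.val - ((q : ℝ) - 1) / 2

theorem sum_centeredVal [NeZero q] : ∑ a : ZMod q, centeredVal a = 0 := by
  have hval : ∀ i : Fin q, (ZMod.finEquiv q i).val = i := by
    obtain ⟨n, rfl⟩ := Nat.exists_eq_succ_of_ne_zero (NeZero.ne q)
    exact fun _ => rfl
  set f : Fin q → ℝ := fun i => (i : ℝ) - ((q : ℝ) - 1) / 2 with hf
  have hsum : ∑ a : ZMod q, centeredVal a = ∑ i, f i := by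
    rw [← (ZMod.finEquiv q).toEquiv.sum_comp]
    simp [centeredVal, hval, hf]
  have hrev : ∀ i, f i.rev = -f i := fun i => by
    simp only [hf, Fin.val_rev, Nat.cast_sub i.isLt, Nat.cast_succ]
    ring
  have hsymm : ∑ i, f i = -∑ i, f i := by
    rw [← sum_neg_distrib, ← Equiv.sum_comp Fin.revPerm]
    simp only [Fin.revPerm_apply, hrev]
  linarith

theorem abs_centeredVal_le [NeZero q] (a : ZMod q) : |centeredVal a| ≤ ((q : ℝ) - 1) / 2 := by
  have hval : (a.val : ℝ) + 1 ≤ q := by exact_mod_cast a.val_lt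
  rw [centeredVal, abs_le]
  constructor <;> linarith [(Nat.cast_nonneg a.val : (0 : ℝ) ≤ a.val)]

theorem sum_centeredVal_apply {m : ℕ} (y : Fin m → ZMod q) :
    ∑ i, centeredVal (y i) = L1 y - ((q : ℝ) - 1) / 2 * m := by
  simp [centeredVal, L1, sum_sub_distrib, mul_comm]

end CenteredVal

section Counting

variable (q m : ℕ) [NeZero q]

theorem card_L1_far_from_mean_mul_sq_le {t : ℝ} (ht : 0 ≤ t) :
    #{y : Fin m → ZMod q | t ≤ |(L1 y : ℝ) - ((q : ℝ) - 1) / 2 * m|} * t ^ 2 ≤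
      m * (((q : ℝ) - 1) / 2) ^ 2 * q ^ m := by
  simpa only [sum_centeredVal_apply, ZMod.card] using
    card_abs_sum_apply_ge_mul_sq_le centeredVal sum_centeredVal abs_centeredVal_le m ht

theorem four_mul_card_L1_far_from_mean_le {ε : ℝ} (hε : 0 < ε) (hm : 0 < m)
    (hqm : ((q : ℝ) - 1) ^ 2 ≤ ε ^ 2 * m) :
    4 * #{y : Fin m → ZMod q | ε * m ≤ |(L1 y : ℝ) - ((q : ℝ) - 1) / 2 * m|} ≤ q ^ m := by
  have hεm : 0 < ε * m := by positivity
  have h := card_L1_far_from_mean_mul_sq_le q m hεm.le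
  have hle : (4 * #{y : Fin m → ZMod q | ε * m ≤ |(L1 y : ℝ) - ((q : ℝ) - 1) / 2 * m|} : ℝ) *
      (ε * m) ^ 2 ≤ q ^ m * (ε * m) ^ 2 := by
    calc _ ≤ 4 * (m * (((q : ℝ) - 1) / 2) ^ 2 * q ^ m) := by linarith
      _ = m * ((q : ℝ) - 1) ^ 2 * q ^ m := by ring
      _ ≤ m * (ε ^ 2 * m) * q ^ m := by gcongr
      _ = q ^ m * (ε * m) ^ 2 := by ring
  exact_mod_cast le_of_mul_le_mul_right hle (by positivity)

theorem card_L1_near_mean_add_card_L1_far_from_mean (ε : ℝ) :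
    q ^ m ≤ #{y : Fin m → ZMod q | (((q : ℝ) - 1) / 2 - ε) * m ≤ L1 y ∧
        (L1 y : ℝ) ≤ (((q : ℝ) - 1) / 2 + ε) * m} +
      #{y : Fin m → ZMod q | ε * m ≤ |(L1 y : ℝ) - ((q : ℝ) - 1) / 2 * m|} := by
  rw [show q ^ m = #(univ : Finset (Fin m → ZMod q)) by simp]
  refine (card_le_card fun y _ => ?_).trans (card_union_le _ _)
  simp only [mem_union, mem_filter, mem_univ, true_and, le_abs]
  by_contra! h
  obtain ⟨hnear, hfar_above, hfar_below⟩ := h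
  by_cases hlow : (((q : ℝ) - 1) / 2 - ε) * m ≤ L1 y
  · linarith [hnear hlow]
  · linarith

end Counting

theorem le_mul_of_div_mul_log_le {a b x : ℝ} (ha : 0 ≤ a) (hb : 0 < b) (hx : 3 ≤ x)
    (h : a / b * Real.log x ≤ x) : a ≤ b * x := by
  have hlog : 1 ≤ Real.log x := by
    rw [Real.le_log_iff_exp_le (by positivity)]
    linarith [Real.exp_one_lt_three]
  rw [← div_le_iff₀' hb]
  exact (le_mul_of_one_le_right (by positivity) hlog).trans h

theorem stmt18_general (q : ℕ) (hq : 2 ≤ q) (ε₀ : ℝ) (hε0 : 0 < ε₀)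
    (m : ℕ) (hm1 : 2 * (q : ℝ) / ((q : ℝ) - 1) ≤ (m : ℝ))
    (hm2 : ((q : ℝ) - 1) ^ 2 / ε₀ ^ 2 * Real.log (m : ℝ) ≤ (m : ℝ)) :
    q ^ (m - 1) ≤ Nat.card {y : Fin m → ZMod q //
      (((q : ℝ) - 1) / 2 - ε₀) * (m : ℝ) ≤ (L1 y : ℝ) ∧
      (L1 y : ℝ) ≤ (((q : ℝ) - 1) / 2 + ε₀) * (m : ℝ)} := by
  have : NeZero q := ⟨by omega⟩
  have hqR : (2 : ℝ) ≤ q := by exact_mod_cast hq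
  have hm3 : 3 ≤ m := by
    have : (2 : ℝ) < 2 * q / (q - 1) := by rw [lt_div_iff₀ (by linarith)]; linarith
    exact_mod_cast (by linarith : (2 : ℝ) < m)
  have hqm : ((q : ℝ) - 1) ^ 2 ≤ ε₀ ^ 2 * m :=
    le_mul_of_div_mul_log_le (sq_nonneg _) (by positivity) (by exact_mod_cast hm3) hm2
  have hfar := four_mul_card_L1_far_from_mean_le q m hε0 (by omega) hqm
  have hcover := card_L1_near_mean_add_card_L1_far_from_mean q m ε₀
  rw [Nat.card_eq_fintype_card, Fintype.card_subtype]
  have hpow : q ^ m = q * q ^ (m - 1) := by rw [← pow_succ']; congr; omega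
  have := Nat.mul_le_mul_right (q ^ (m - 1)) hq
  omega

theorem stmt18 (q : ℕ) (hq : 2 ≤ q) (ε₀ : ℝ) (hε0 : 0 < ε₀) (hε : ε₀ < ((q : ℝ) - 1) / 2)
    (m : ℕ) (hm1 : 2 * (q : ℝ) / ((q : ℝ) - 1) ≤ (m : ℝ))
    (hm2 : ((q : ℝ) - 1) ^ 2 / ε₀ ^ 2 * Real.log (m : ℝ) ≤ (m : ℝ)) :
    q ^ (m - 1) ≤ Nat.card {y : Fin m → ZMod q //
      (((q : ℝ) - 1) / 2 - ε₀) * (m : ℝ) ≤ (L1 y : ℝ) ∧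
      (L1 y : ℝ) ≤ (((q : ℝ) - 1) / 2 + ε₀) * (m : ℝ)} :=
  stmt18_general q hq ε₀ hε0 m hm1 hm2
end
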